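/- arXiv:2405.19717 — 8 statements merged into one kernel-verified Lean document; each statement's English description precedes it below -/
import Mathlib

section
/- Let G be a graph of order n ≥ 3 in which every vertex lies in a cycle. Then crx_1(G) = e(G) if and only if G is the cycle C_n. -/
open SimpleGraph

/-- `G.CycleThrough S`: there is a cycle in `G` containing all vertices of `S`. -/
def SimpleGraph.CycleThrough {V : Type*} (G : SimpleGraph V) (S : Set V) : Prop :=
  ∃ (u : V) (c : G.Walk u u), c.IsCycle ∧ ∀ v ∈ S, v ∈ c.support

/-- A `k`-rainbow cycle colouring: every `k`-set of vertices lies in a cycle whose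
edges receive pairwise distinct colours. -/
def SimpleGraph.IsRainbowCycleColoring {V : Type*} (G : SimpleGraph V) (k : ℕ)
    (φ : Sym2 V → ℕ) : Prop :=
  ∀ S : Finset V, S.card = k →
    ∃ (u : V) (c : G.Walk u u), c.IsCycle ∧ (∀ v ∈ S, v ∈ c.support) ∧
      (c.edges.map φ).Nodup

/-- The `k`-rainbow cycle index `crx_k(G)`. -/
noncomputable def SimpleGraph.crx {V : Type*} (G : SimpleGraph V) (k : ℕ) : ℕ :=
  sInf {r | ∃ φ : Sym2 V → ℕ, (∀ e ∈ G.edgeSet, φ e < r) ∧ G.IsRainbowCycleColoring k φ}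

/-- Number of edges of `G`. -/
noncomputable def SimpleGraph.numEdges {V : Type*} (G : SimpleGraph V) : ℕ :=
  Nat.card G.edgeSet

/-- A graph is 2-connected if it has more than 2 vertices and deleting any vertex
leaves it connected. -/
def SimpleGraph.IsTwoConnected {V : Type*} (G : SimpleGraph V) : Prop :=
  2 < Nat.card V ∧ ∀ v : V, (G.induce {w | w ≠ v}).Connected

/-- A graph is Hamiltonian if it has a cycle through all its vertices. -/
def SimpleGraph.IsHamiltonianGraph {V : Type*} (G : SimpleGraph V) : Prop :=
  ∃ (u : V) (c : G.Walk u u), c.IsCycle ∧ ∀ v : V, v ∈ c.support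

/-!
Colouring two distinct edges `a`, `b` alike and all other edges distinctly is still a valid
colouring as soon as every vertex lies on a cycle containing at most one of `a`, `b`; then
`crx_1(G) ≤ e(G) - 1`. Such a pair exists if `G` is disconnected (an edge from each of two
components) and if some vertex `v` has three neighbours `x₁, x₂, x₃`: were both `{vx₁, vx₂}` and
`{vx₂, vx₃}` unusable, witnessed by `u₁` and `u₂`, then a cycle `D` through `u₂` contains `vx₂`
and `vx₃`, hence misses `u₁`, and rerouting a cycle through `u₁` along `D - vx₂` yields a cycle
through `u₁` avoiding `vx₂`. So `crx_1(G) = e(G)` forces a connected graph of maximum degree two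
containing a cycle, that is `C_n`. Conversely, the only cycle of `C_n` uses every edge, so a
rainbow cycle needs `e(G)` colours.
-/

open Finset

namespace SimpleGraph

variable {V : Type*} {G : SimpleGraph V}

lemma exists_isRainbowCycleColoring_lt_card {β : Type*} [DecidableEq β] {k : ℕ}
    (φ : Sym2 V → β) (T : Finset β) (hT : ∀ e ∈ G.edgeSet, φ e ∈ T)
    (hφ : ∀ S : Finset V, #S = k → ∃ (u : V) (c : G.Walk u u), c.IsCycle ∧
      (∀ v ∈ S, v ∈ c.support) ∧ (c.edges.map φ).Nodup) :
    ∃ ψ : Sym2 V → ℕ, (∀ e ∈ G.edgeSet, ψ e < #T) ∧ G.IsRainbowCycleColoring k ψ := by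
  let index : β → ℕ := fun b => if h : b ∈ T then T.equivFin ⟨b, h⟩ else 0
  refine ⟨index ∘ φ, fun e he => by simp [index, hT e he], fun S hS => ?_⟩
  obtain ⟨u, c, hc, hS, hnodup⟩ := hφ S hS
  refine ⟨u, c, hc, hS, ?_⟩
  rw [← List.map_map]
  refine hnodup.map_on fun b hb b' hb' hbb' => ?_
  obtain ⟨e, he, rfl⟩ := List.mem_map.mp hb
  obtain ⟨e', he', rfl⟩ := List.mem_map.mp hb'
  have hT₁ := hT e (c.edges_subset_edgeSet he)
  have hT₂ := hT e' (c.edges_subset_edgeSet he')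
  simpa [index, hT₁, hT₂, Fin.val_inj] using hbb'

lemma exists_isRainbowCycleColoring_one_lt_card {β : Type*} [DecidableEq β]
    (φ : Sym2 V → β) (T : Finset β) (hT : ∀ e ∈ G.edgeSet, φ e ∈ T)
    (hφ : ∀ v, ∃ c : G.Walk v v, c.IsCycle ∧ (c.edges.map φ).Nodup) :
    ∃ ψ : Sym2 V → ℕ, (∀ e ∈ G.edgeSet, ψ e < #T) ∧ G.IsRainbowCycleColoring 1 ψ := by
  refine exists_isRainbowCycleColoring_lt_card φ T hT fun S hS => ?_
  obtain ⟨v, rfl⟩ := card_eq_one.mp hS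
  obtain ⟨c, hc, hnodup⟩ := hφ v
  exact ⟨v, c, hc, by simp, hnodup⟩

lemma numEdges_eq_card_edgeFinset [Fintype G.edgeSet] : G.numEdges = #G.edgeFinset := by
  rw [numEdges, edgeFinset_card, Nat.card_eq_fintype_card]

lemma exists_isRainbowCycleColoring_one_lt_numEdges [DecidableEq V] [Fintype G.edgeSet]
    (hcyc : ∀ v, ∃ c : G.Walk v v, c.IsCycle) :
    ∃ ψ : Sym2 V → ℕ, (∀ e ∈ G.edgeSet, ψ e < G.numEdges) ∧ G.IsRainbowCycleColoring 1 ψ := by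
  rw [numEdges_eq_card_edgeFinset]
  refine exists_isRainbowCycleColoring_one_lt_card id _ (fun e he => mem_edgeFinset.mpr he)
    fun v => ?_
  obtain ⟨c, hc⟩ := hcyc v
  exact ⟨c, hc, by simpa using hc.edges_nodup⟩

lemma crx_one_le_numEdges [DecidableEq V] [Fintype G.edgeSet]
    (hcyc : ∀ v, ∃ c : G.Walk v v, c.IsCycle) : G.crx 1 ≤ G.numEdges :=
  Nat.sInf_le (exists_isRainbowCycleColoring_one_lt_numEdges hcyc)

/-- Two distinct edges that may receive the same colour: every vertex lies on a cycle
containing at most one of them. -/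
def IsMergeablePair (G : SimpleGraph V) (a b : Sym2 V) : Prop :=
  a ∈ G.edgeSet ∧ b ∈ G.edgeSet ∧ a ≠ b ∧
    ∀ v, ∃ c : G.Walk v v, c.IsCycle ∧ (a ∉ c.edges ∨ b ∉ c.edges)

lemma IsMergeablePair.crx_one_lt_numEdges [DecidableEq V] [Fintype G.edgeSet] {a b : Sym2 V}
    (hab : G.IsMergeablePair a b) : G.crx 1 < G.numEdges := by
  obtain ⟨ha, hb, hne, hcyc⟩ := hab
  have hb' : b ∈ G.edgeFinset := mem_edgeFinset.mpr hb
  have hcard : #(G.edgeFinset.erase b) < G.numEdges := by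
    rw [numEdges_eq_card_edgeFinset]
    exact card_erase_lt_of_mem hb'
  refine lt_of_le_of_lt (Nat.sInf_le <| exists_isRainbowCycleColoring_one_lt_card
    (fun e => if e = b then a else e) (G.edgeFinset.erase b) (fun e he => ?_) fun v => ?_) hcard
  · split_ifs with h
    · exact mem_erase.mpr ⟨hne, mem_edgeFinset.mpr ha⟩
    · exact mem_erase.mpr ⟨h, mem_edgeFinset.mpr he⟩
  · obtain ⟨c, hc, hnot⟩ := hcyc v
    refine ⟨c, hc, hc.edges_nodup.map_on fun e he e' he' hee' => ?_⟩
    split_ifs at hee' with h h' h' <;> subst_vars <;> tauto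

lemma numEdges_le_of_isRainbowCycleColoring [Nonempty V] [Fintype G.edgeSet] {r : ℕ}
    {φ : Sym2 V → ℕ} (hall : ∀ u (c : G.Walk u u), c.IsCycle → ∀ e ∈ G.edgeSet, e ∈ c.edges)
    (hφ : ∀ e ∈ G.edgeSet, φ e < r) (hrb : G.IsRainbowCycleColoring 1 φ) :
    G.numEdges ≤ r := by
  obtain ⟨u, c, hc, -, hnodup⟩ := hrb {Classical.arbitrary V} (card_singleton _)
  rw [numEdges_eq_card_edgeFinset, ← card_range r]
  refine card_le_card_of_injOn φ (fun e he => mem_range.mpr (hφ e (mem_edgeFinset.mp he)))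
    fun e he e' he' hee' => ?_
  exact List.inj_on_of_nodup_map hnodup (hall u c hc e (mem_edgeFinset.mp he))
    (hall u c hc e' (mem_edgeFinset.mp he')) hee'

lemma numEdges_le_crx_one [Nonempty V] [DecidableEq V] [Fintype G.edgeSet]
    (hcyc : ∀ v, ∃ c : G.Walk v v, c.IsCycle)
    (hall : ∀ u (c : G.Walk u u), c.IsCycle → ∀ e ∈ G.edgeSet, e ∈ c.edges) :
    G.numEdges ≤ G.crx 1 := by
  obtain ⟨φ, hφ, hrb⟩ := Nat.sInf_mem (s := {r | ∃ φ : Sym2 V → ℕ,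
    (∀ e ∈ G.edgeSet, φ e < r) ∧ G.IsRainbowCycleColoring 1 φ})
    ⟨_, exists_isRainbowCycleColoring_one_lt_numEdges hcyc⟩
  exact numEdges_le_of_isRainbowCycleColoring hall hφ hrb

lemma eq_or_eq_of_degree_le_two {v x y z : V} [Fintype (G.neighborSet v)]
    (hdeg : G.degree v ≤ 2) (hx : G.Adj v x) (hy : G.Adj v y) (hz : G.Adj v z) (hxy : x ≠ y) :
    z = x ∨ z = y := by
  classical
  by_contra! h
  have hsub : {x, y, z} ⊆ G.neighborFinset v := by
    simp [insert_subset_iff, hx, hy, hz]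
  have := card_le_card hsub
  rw [card_neighborFinset_eq_degree, card_eq_three.mpr ⟨x, y, z, hxy, h.1.symm, h.2.symm, rfl⟩]
    at this
  omega

namespace Walk

lemma IsCycle.exists_ne_mem_edges {u v : V} {c : G.Walk u u} (hc : c.IsCycle)
    (hv : v ∈ c.support) : ∃ x y, x ≠ y ∧ s(v, x) ∈ c.edges ∧ s(v, y) ∈ c.edges := by
  obtain ⟨x, y, hxy, hxy'⟩ := Set.ncard_eq_two.mp (hc.ncard_neighborSet_toSubgraph_eq_two hv)
  have hx : x ∈ c.toSubgraph.neighborSet v := hxy' ▸ Set.mem_insert x {y}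
  have hy : y ∈ c.toSubgraph.neighborSet v := hxy' ▸ Set.mem_insert_of_mem x rfl
  exact ⟨x, y, hxy, c.mem_edges_toSubgraph.mp hx, c.mem_edges_toSubgraph.mp hy⟩

lemma IsCycle.eq_or_eq_of_mem_edges {u v x y z : V} {c : G.Walk u u} (hc : c.IsCycle)
    (hx : s(v, x) ∈ c.edges) (hy : s(v, y) ∈ c.edges) (hz : s(v, z) ∈ c.edges) (hxy : x ≠ y) :
    z = x ∨ z = y := by
  obtain ⟨p, q, -, hpq⟩ := Set.ncard_eq_two.mp
    (hc.ncard_neighborSet_toSubgraph_eq_two (c.fst_mem_support_of_mem_edges hx))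
  have hmem : ∀ t, s(v, t) ∈ c.edges → t = p ∨ t = q := fun t ht => by
    have ht : t ∈ c.toSubgraph.neighborSet v := c.mem_edges_toSubgraph.mpr ht
    simpa [hpq] using ht
  rcases hmem x hx with rfl | rfl <;> rcases hmem y hy with rfl | rfl <;>
    rcases hmem z hz with rfl | rfl <;> simp_all

variable [G.LocallyFinite]

lemma IsCycle.mem_edges_of_adj {u v w : V} {c : G.Walk u u} (hc : c.IsCycle)
    (hdeg : G.degree v ≤ 2) (hv : v ∈ c.support) (hvw : G.Adj v w) : s(v, w) ∈ c.edges := by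
  obtain ⟨x, y, hxy, hx, hy⟩ := hc.exists_ne_mem_edges hv
  rcases eq_or_eq_of_degree_le_two hdeg (c.adj_of_mem_edges hx) (c.adj_of_mem_edges hy) hvw hxy
    with rfl | rfl <;> assumption

lemma IsCycle.mem_support_of_preconnected {u : V} {c : G.Walk u u} (hc : c.IsCycle)
    (hconn : G.Preconnected) (hdeg : ∀ v, G.degree v ≤ 2) (v : V) : v ∈ c.support := by
  suffices ∀ {a b : V} (p : G.Walk a b), a ∈ c.support → b ∈ c.support from
    this (hconn u v).some c.start_mem_support
  intro a b p
  induction p with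
  | nil => exact id
  | cons h _ ih =>
    exact fun ha => ih (c.snd_mem_support_of_mem_edges (hc.mem_edges_of_adj (hdeg _) ha h))

lemma IsCycle.mem_edges_of_preconnected {u : V} {c : G.Walk u u} (hc : c.IsCycle)
    (hconn : G.Preconnected) (hdeg : ∀ v, G.degree v ≤ 2) {e : Sym2 V} (he : e ∈ G.edgeSet) :
    e ∈ c.edges := by
  induction e using Sym2.ind with
  | _ v w => exact hc.mem_edges_of_adj (hdeg v) (hc.mem_support_of_preconnected hconn hdeg v) he

lemma IsCycle.isHamiltonianCycle_of_preconnected [DecidableEq V] {u : V} {c : G.Walk u u}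
    (hc : c.IsCycle) (hconn : G.Preconnected) (hdeg : ∀ v, G.degree v ≤ 2) :
    c.IsHamiltonianCycle := by
  refine ⟨hc, hc.isPath_tail.isHamiltonian_of_mem fun v => ?_⟩
  rcases (c.mem_support_iff).mp (hc.mem_support_of_preconnected hconn hdeg v) with rfl | hv
  · exact c.tail.end_mem_support
  · rwa [c.support_tail_of_not_nil hc.not_nil]

end Walk

lemma Copy.adj_iff_of_degree_le {W : Type*} {H : SimpleGraph W} (f : Copy H G) {v w : W}
    [Fintype (H.neighborSet v)] [Fintype (G.neighborSet (f v))]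
    (hdeg : G.degree (f v) ≤ H.degree v) : G.Adj (f v) (f w) ↔ H.Adj v w := by
  classical
  refine ⟨fun h => ?_, f.toHom.map_adj⟩
  have hsub : (H.neighborFinset v).map ⟨f, f.injective⟩ ⊆ G.neighborFinset (f v) := by
    intro x hx
    obtain ⟨y, hy, rfl⟩ := mem_map.mp hx
    simpa using f.toHom.map_adj ((mem_neighborFinset _ _ _).mp hy)
  have heq := eq_of_subset_of_card_le hsub (by simpa using hdeg)
  obtain ⟨y, hy, hyw⟩ := mem_map.mp (heq ▸ (mem_neighborFinset _ _ _).mpr h)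
  rwa [f.injective hyw, mem_neighborFinset] at hy

lemma cycleGraph_degree_eq_two {n : ℕ} (hn : 3 ≤ n) (v : Fin n) :
    (cycleGraph n).degree v = 2 := by
  obtain ⟨m, rfl⟩ := Nat.exists_eq_add_of_le' hn
  exact cycleGraph_degree_three_le

lemma nonempty_iso_cycleGraph_of_preconnected [Fintype V] [DecidableEq V] [G.LocallyFinite]
    {u : V} {c : G.Walk u u} (hc : c.IsCycle) (hconn : G.Preconnected)
    (hdeg : ∀ v, G.degree v ≤ 2) : Nonempty (G ≃g cycleGraph (Fintype.card V)) := by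
  have hlen := (hc.isHamiltonianCycle_of_preconnected hconn hdeg).length_eq
  have hn : 3 ≤ Fintype.card V := hlen ▸ hc.three_le_length
  obtain ⟨f⟩ := (cycleGraph_isContained_iff hn).mpr ⟨u, c, hc, hlen⟩
  have hbij : Function.Bijective f :=
    (Fintype.bijective_iff_injective_and_card f).mpr ⟨f.injective, by simp⟩
  refine ⟨(RelIso.mk (Equiv.ofBijective f hbij) fun {v w} => ?_).symm⟩
  exact f.adj_iff_of_degree_le ((hdeg _).trans (cycleGraph_degree_eq_two hn v).ge)

namespace Walk

lemma reachable_of_forall_ne_mem_edgeSet {H : SimpleGraph V} {a b v x : V} (p : G.Walk a b)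
    (hp : ∀ e ∈ p.edges, e ≠ s(v, x) → e ∈ H.edgeSet) (hvx : H.Reachable v x) :
    H.Reachable a b := by
  induction p with
  | nil => rfl
  | @cons a a' b h q ih =>
    simp only [edges_cons, List.mem_cons, forall_eq_or_imp] at hp
    refine Reachable.trans ?_ (ih hp.2)
    by_cases he : s(a, a') = s(v, x)
    · rcases Sym2.eq_iff.mp he with ⟨rfl, rfl⟩ | ⟨rfl, rfl⟩
      exacts [hvx, hvx.symm]
    · exact (hp.1 he).reachable

lemma IsCycle.reachable_of_forall_ne_mem_edgeSet {H : SimpleGraph V} {u v x : V}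
    {c : G.Walk u u} (hc : c.IsCycle) (hvx : s(v, x) ∈ c.edges)
    (hH : ∀ e ∈ c.edges, e ≠ s(v, x) → e ∈ H.edgeSet) : H.Reachable v x := by
  let H' := H ⊔ fromEdgeSet {s(v, x)}
  have hc' : ∀ e ∈ c.edges, e ∈ H'.edgeSet := fun e he => by
    by_cases h : e = s(v, x)
    · subst h
      simp [H', (c.adj_of_mem_edges hvx).ne]
    · simp [H', hH e he h]
  obtain ⟨-, hreach⟩ := adj_and_reachable_delete_edges_iff_exists_cycle.mpr
    ⟨u, c.transfer H' hc', hc.transfer hc', by rwa [edges_transfer]⟩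
  refine hreach.mono fun a b hab => ?_
  simp only [deleteEdges_adj, H', sup_adj, fromEdgeSet_adj, Set.mem_singleton_iff] at hab
  tauto

lemma IsCycle.exists_isCycle_not_mem_edges [DecidableEq V] {w w' u v x : V}
    {C : G.Walk w w} {D : G.Walk w' w'} (hC : C.IsCycle) (hD : D.IsCycle)
    (hvxC : s(v, x) ∈ C.edges) (hvxD : s(v, x) ∈ D.edges) (hu : u ∈ C.support)
    (huD : u ∉ D.support) : ∃ c : G.Walk u u, c.IsCycle ∧ s(v, x) ∉ c.edges := by
  obtain ⟨C', hC', hvxC'⟩ : ∃ C' : G.Walk u u, C'.IsCycle ∧ s(v, x) ∈ C'.edges :=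
    ⟨C.rotate u hu, hC.rotate hu, (C.rotate_edges u hu).mem_iff.mpr hvxC⟩
  cases C' with
  | nil => simp at hC'
  | @cons _ w _ huw q =>
  obtain ⟨-, huwq⟩ := (cons_isCycle_iff q huw).mp hC'
  have hne : s(u, w) ≠ s(v, x) := by
    rintro h
    rcases Sym2.eq_iff.mp h with ⟨rfl, -⟩ | ⟨rfl, -⟩
    exacts [huD (D.fst_mem_support_of_mem_edges hvxD), huD (D.snd_mem_support_of_mem_edges hvxD)]
  -- In `C = u w ⋯ u` the edge `vx` of `C - uw` can be bypassed along `D - vx`, which misses `u`;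
  -- so `uw` lies on a cycle of `G - vx`.
  let K := G.deleteEdges {s(v, x)}
  have hreach : (K.deleteEdges {s(u, w)}).Reachable u w := by
    refine q.reverse.reachable_of_forall_ne_mem_edgeSet (fun e he hex => ?_)
      (hD.reachable_of_forall_ne_mem_edgeSet hvxD fun e he hex => ?_)
    · rw [edges_reverse, List.mem_reverse] at he
      simp only [K, edgeSet_deleteEdges, Set.mem_sdiff, Set.mem_singleton_iff]
      exact ⟨⟨q.edges_subset_edgeSet he, hex⟩, fun h => huwq (h ▸ he)⟩
    · simp only [K, edgeSet_deleteEdges, Set.mem_sdiff, Set.mem_singleton_iff]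
      exact ⟨⟨D.edges_subset_edgeSet he, hex⟩,
        fun h => huD (D.fst_mem_support_of_mem_edges (h ▸ he))⟩
  obtain ⟨u', p, hp, huwp⟩ := adj_and_reachable_delete_edges_iff_exists_cycle.mp
    ⟨deleteEdges_adj.mpr ⟨huw, hne⟩, hreach⟩
  have hup := p.fst_mem_support_of_mem_edges huwp
  refine ⟨(p.rotate u hup).mapLe (deleteEdges_le _), (hp.rotate hup).mapLe _, fun h => ?_⟩
  rw [edges_mapLe_eq_edges] at h
  simpa [K, edgeSet_deleteEdges] using (p.rotate u hup).edges_subset_edgeSet h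

end Walk

lemma exists_isMergeablePair_of_not_reachable (hcyc : ∀ v, ∃ c : G.Walk v v, c.IsCycle)
    {u w : V} (huw : ¬ G.Reachable u w) : ∃ a b, G.IsMergeablePair a b := by
  classical
  obtain ⟨C, hC⟩ := hcyc u
  obtain ⟨D, hD⟩ := hcyc w
  have hboth : ∀ {z} (c : G.Walk z z), s(u, C.snd) ∈ c.edges → s(w, D.snd) ∉ c.edges :=
    fun c ha hb => huw <| (c.takeUntil u (c.fst_mem_support_of_mem_edges ha)).reachable.symm.trans
      (c.takeUntil w (c.fst_mem_support_of_mem_edges hb)).reachable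
  have haC := C.mk_start_snd_mem_edges hC.not_nil
  refine ⟨_, _, C.edges_subset_edgeSet haC,
    D.edges_subset_edgeSet (D.mk_start_snd_mem_edges hD.not_nil),
    fun h => hboth C haC (h ▸ haC), fun v => ?_⟩
  obtain ⟨c, hc⟩ := hcyc v
  exact ⟨c, hc, not_and_or.mp fun h => hboth c h.1 h.2⟩

lemma exists_isMergeablePair_of_two_lt_degree [DecidableEq V] [G.LocallyFinite]
    (hcyc : ∀ v, ∃ c : G.Walk v v, c.IsCycle) {v : V} (hv : 2 < G.degree v) :
    ∃ a b, G.IsMergeablePair a b := by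
  obtain ⟨x, hx, y, hy, z, hz, hxy, hxz, hyz⟩ :=
    two_lt_card.mp (by rwa [card_neighborFinset_eq_degree] : 2 < #(G.neighborFinset v))
  rw [mem_neighborFinset] at hx hy hz
  by_contra! hno
  have hforced : ∀ {p q : V}, G.Adj v p → G.Adj v q → p ≠ q →
      ∃ u, ∀ c : G.Walk u u, c.IsCycle → s(v, p) ∈ c.edges ∧ s(v, q) ∈ c.edges := by
    intro p q hp hq hpq
    by_contra! h
    refine hno _ _ ⟨hp, hq, fun h' => hpq (Sym2.congr_right.mp h'), fun u => ?_⟩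
    obtain ⟨c, hc, hpc⟩ := h u
    exact ⟨c, hc, not_and_or.mp fun h' => hpc h'.1 h'.2⟩
  obtain ⟨u₁, hu₁⟩ := hforced hx hy hxy
  obtain ⟨u₂, hu₂⟩ := hforced hy hz hyz
  obtain ⟨C, hC⟩ := hcyc u₁
  obtain ⟨D, hD⟩ := hcyc u₂
  have hu₁D : u₁ ∉ D.support := fun hu => by
    have hxD := (D.rotate_edges u₁ hu).mem_iff.mp (hu₁ _ (hD.rotate hu)).1
    rcases hD.eq_or_eq_of_mem_edges (hu₂ D hD).1 (hu₂ D hD).2 hxD hyz with rfl | rfl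
    exacts [hxy rfl, hxz rfl]
  obtain ⟨c, hc, hyc⟩ := hC.exists_isCycle_not_mem_edges hD (hu₁ C hC).2 (hu₂ D hD).1
    C.start_mem_support hu₁D
  exact hyc (hu₁ c hc).2

end SimpleGraph

/-- for G of order n ≥ 3 in which every vertex lies in a cycle,
crx_1(G) = e(G) iff G is the cycle C_n. -/
theorem crx_one_eq_numEdges_iff_cycle
    {V : Type*} [Fintype V] (G : SimpleGraph V) (hn : 3 ≤ Fintype.card V)
    (hF : ∀ v : V, G.CycleThrough {v}) :
    G.crx 1 = G.numEdges ↔ Nonempty (G ≃g SimpleGraph.cycleGraph (Fintype.card V)) := by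
  classical
  have hcyc : ∀ v, ∃ c : G.Walk v v, c.IsCycle := fun v => by
    obtain ⟨u, c, hc, hv⟩ := hF v
    exact ⟨c.rotate v (hv v rfl), hc.rotate _⟩
  have : Nonempty V := Fintype.card_pos_iff.mp (by omega)
  constructor
  · intro h
    have hno : ∀ a b, ¬ G.IsMergeablePair a b := fun a b hab => hab.crx_one_lt_numEdges.ne h
    have hconn : G.Preconnected := fun u w => not_not.mp fun huw =>
      let ⟨a, b, hab⟩ := exists_isMergeablePair_of_not_reachable hcyc huw
      hno a b hab
    have hdeg : ∀ v, G.degree v ≤ 2 := fun v => not_lt.mp fun hv =>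
      let ⟨a, b, hab⟩ := exists_isMergeablePair_of_two_lt_degree hcyc hv
      hno a b hab
    obtain ⟨c, hc⟩ := hcyc (Classical.arbitrary V)
    exact nonempty_iso_cycleGraph_of_preconnected hc hconn hdeg
  · rintro ⟨e⟩
    have hconn : G.Preconnected := e.preconnected_iff.mpr cycleGraph_preconnected
    have hdeg : ∀ v, G.degree v ≤ 2 := fun v => by
      rw [← e.degree_eq, cycleGraph_degree_eq_two hn]
    exact le_antisymm (crx_one_le_numEdges hcyc) (numEdges_le_crx_one hcyc
      fun _ _ hc _ he => hc.mem_edges_of_preconnected hconn hdeg he)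
end

section
/- Let G be a 2-connected graph of order n ≥ 3. Then crx_2(G) = e(G) if and only if G is minimally 2-connected, i.e., G is 2-connected but G − e is not 2-connected for every edge e. -/
/-!
Upper bound: an injective colouring of a 2-connected spanning subgraph `H ≤ G` is rainbow, since
any two vertices of `H` lie on a common cycle of `H` (grow a cycle along a walk, attaching an ear
at each step). Hence `crx₂ G ≤ e(G - e) < e(G)` whenever some `G - e` is still 2-connected.

Lower bound: if `G - f` is not 2-connected, some vertex `w` together with `f` splits the rest of
`G` into two sides, and every cycle through vertices on both sides uses `f`. For two edges `f` and
`g`, either some pair of vertices is split by both, or an endpoint of one edge is the cut vertex of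
the other and has only two neighbours; in both cases some pair of vertices lies only on cycles
through `f` and `g`, so a rainbow colouring must be injective on the edges.
-/

open SimpleGraph

namespace SimpleGraph

variable {V : Type*} {G : SimpleGraph V}

namespace Walk

lemma IsCycle.exists_mem_support_ne_ne {r : V} {c : G.Walk r r} (hc : c.IsCycle) (a b : V) :
    ∃ x ∈ c.support, x ≠ a ∧ x ≠ b := by
  classical
  by_contra! h
  have hsub : c.support.tail.toFinset ⊆ {a, b} := fun x hx => by
    have hxa := h x (List.mem_of_mem_tail (List.mem_toFinset.1 hx))
    rcases eq_or_ne x a with rfl | hx'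
    · simp
    · simp [hxa hx']
  have hcard := Finset.card_le_card hsub
  rw [List.toFinset_card_of_nodup hc.support_nodup, List.length_tail, length_support] at hcard
  have := hc.three_le_length
  have := Finset.card_le_two (a := a) (b := b)
  omega

lemma IsCycle.exists_walk_notMem_support {r a b w : V} {c : G.Walk r r} (hc : c.IsCycle)
    (ha : a ∈ c.support) (hb : b ∈ c.support) (haw : a ≠ w) (hbw : b ≠ w) :
    ∃ p : G.Walk a b, w ∉ p.support ∧ p.edges ⊆ c.edges := by
  classical
  by_cases hw : w ∈ c.support
  · set T := (c.rotate w hw).tail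
    have hT : T.IsPath := (hc.rotate hw).isPath_tail
    have hmem : ∀ x ∈ c.support, x ≠ w → x ∈ T.support := fun x hx hxw => by
      rw [support_tail_of_not_nil _ (hc.rotate hw).not_nil]
      rw [← mem_support_rotate_iff c w hw, ← cons_tail_support] at hx
      exact (List.mem_cons.1 hx).resolve_left hxw
    refine ⟨(T.takeUntil a (hmem a ha haw)).reverse.append (T.takeUntil b (hmem b hb hbw)),
      ?_, fun e he => ?_⟩
    · simp only [mem_support_append_iff, support_reverse, List.mem_reverse, not_or]
      exact ⟨endpoint_notMem_support_takeUntil hT _ haw.symm,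
        endpoint_notMem_support_takeUntil hT _ hbw.symm⟩
    · have heT : e ∈ T.edges := by
        simp only [edges_append, edges_reverse, List.mem_append, List.mem_reverse] at he
        exact he.elim (edges_takeUntil_subset_edges _ _ ·) (edges_takeUntil_subset_edges _ _ ·)
      rw [edges_tail] at heT
      exact (c.rotate_edges w hw).perm.subset (List.mem_of_mem_tail heT)
  · refine ⟨(c.takeUntil a ha).reverse.append (c.takeUntil b hb), fun hw' => hw ?_,
      fun e he => ?_⟩
    · simp only [mem_support_append_iff, support_reverse, List.mem_reverse] at hw'
      exact hw'.elim (support_takeUntil_subset_support _ _ ·)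
        (support_takeUntil_subset_support _ _ ·)
    · simp only [edges_append, edges_reverse, List.mem_append, List.mem_reverse] at he
      exact he.elim (edges_takeUntil_subset_edges _ _ ·) (edges_takeUntil_subset_edges _ _ ·)

lemma IsCycle.exists_isPath_mem_support {r x y w : V} {c : G.Walk r r} (hc : c.IsCycle)
    (hx : x ∈ c.support) (hy : y ∈ c.support) (hw : w ∈ c.support) (hwy : w ≠ y) :
    ∃ p : G.Walk w y, p.IsPath ∧ x ∈ p.support ∧ p.support ⊆ c.support := by
  classical
  set c' := c.rotate y hy
  have hc' : c'.IsCycle := hc.rotate hy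
  have hw' : w ∈ c'.support := (mem_support_rotate_iff c y hy).2 hw
  have hsub : ∀ t ∈ c'.support, t ∈ c.support := fun t => (mem_support_rotate_iff c y hy).1
  have hsplit := c'.take_spec hw'
  have hx' : x ∈ c'.support := (mem_support_rotate_iff c y hy).2 hx
  rw [← hsplit, mem_support_append_iff] at hx'
  rcases hx' with hxA | hxB
  · refine ⟨(c'.takeUntil w hw').reverse, (hc'.isPath_takeUntil hw').reverse, by simpa, ?_⟩
    intro t ht
    rw [support_reverse, List.mem_reverse] at ht
    exact hsub t (support_takeUntil_subset_support _ _ ht)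
  · have hcyc : ((c'.takeUntil w hw').append (c'.dropUntil w hw')).IsCycle := by rwa [hsplit]
    exact ⟨_, hcyc.isPath_of_append_right (not_nil_of_ne hwy.symm), hxB,
      fun t ht => hsub t (support_dropUntil_subset_support _ _ ht)⟩

lemma isCycle_cons_append {y z w : V} (h : G.Adj y z) {q : G.Walk z w} {p : G.Walk w y}
    (hq : q.IsPath) (hp : p.IsPath) (hzw : z ≠ w) (hwy : w ≠ y)
    (hqp : ∀ t ∈ q.support, t ∈ p.support → t = w) : ((cons h q).append p).IsCycle := by
  have hyq : y ∉ q.support := fun hy => hwy (hqp y hy p.end_mem_support).symm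
  refine ((cons_isPath_iff h q).2 ⟨hq, hyq⟩).isCycle_append hp ?_ ?_
  · intro t htq htp
    rw [support_cons, List.tail_cons] at htq
    obtain rfl := hqp t htq (List.mem_of_mem_tail htp)
    rw [isPath_def, ← cons_tail_support] at hp
    exact (List.nodup_cons.1 hp).1 htp
  · have := not_nil_iff_lt_length.1 (not_nil_of_ne hzw (p := q))
    left
    simp only [length_cons]
    omega

lemma notMem_support_of_deleteIncidenceSet {w a b : V} (p : (G.deleteIncidenceSet w).Walk a b)
    (ha : a ≠ w) : w ∉ p.support := by
  induction p with
  | nil => simpa using ha.symm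
  | cons h p ih =>
    simp only [support_cons, List.mem_cons, not_or]
    exact ⟨ha.symm, ih (deleteIncidenceSet_adj.1 h).2.2⟩

end Walk

open Walk

lemma deleteIncidenceSet_le_deleteEdges {w : V} {e : Sym2 V} (hw : w ∈ e) :
    G.deleteIncidenceSet w ≤ G.deleteEdges {e} := by
  intro a b hab
  rw [deleteIncidenceSet_adj] at hab
  refine deleteEdges_adj.2 ⟨hab.1, ?_⟩
  rintro rfl
  rcases Sym2.mem_iff.1 hw with rfl | rfl
  exacts [hab.2.1 rfl, hab.2.2 rfl]

lemma deleteIncidenceSet_deleteEdges (w : V) (s : Set (Sym2 V)) :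
    (G.deleteEdges s).deleteIncidenceSet w = (G.deleteIncidenceSet w).deleteEdges s := by
  ext a b
  simp only [deleteIncidenceSet_adj, deleteEdges_adj]
  tauto

lemma reachable_induce_ne_iff {w a b : V} (ha : a ≠ w) (hb : b ≠ w) :
    (G.induce {x | x ≠ w}).Reachable ⟨a, ha⟩ ⟨b, hb⟩ ↔ (G.deleteIncidenceSet w).Reachable a b := by
  refine ⟨fun h => h.map ⟨Subtype.val, fun {x y} hxy => deleteIncidenceSet_adj.2 ⟨hxy, x.2, y.2⟩⟩,
    fun ⟨p⟩ => ?_⟩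
  have := (p.induce {x | x ≠ w} fun x hx hxw => p.notMem_support_of_deleteIncidenceSet ha
    (hxw ▸ hx)).reachable
  rwa [induce_deleteIncidenceSet_of_notMem _ (by simp)] at this

lemma Reachable.deleteEdges_singleton {H : SimpleGraph V} {u v a b : V} (hab : H.Reachable a b)
    (huv : H.Adj u v → (H.deleteEdges {s(u, v)}).Reachable u v) :
    (H.deleteEdges {s(u, v)}).Reachable a b := by
  obtain ⟨p⟩ := hab
  induction p with
  | nil => rfl
  | @cons x y _ h p ih =>
    refine Reachable.trans ?_ ih
    by_cases he : s(x, y) = s(u, v)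
    · rcases Sym2.eq_iff.1 he with ⟨rfl, rfl⟩ | ⟨rfl, rfl⟩
      exacts [huv h, (huv h.symm).symm]
    · exact (deleteEdges_adj.2 ⟨h, he⟩).reachable

namespace IsTwoConnected

lemma finite (h2 : G.IsTwoConnected) : Finite V :=
  Nat.finite_of_card_ne_zero (by have := h2.1; omega)

lemma exists_ne_ne (h2 : G.IsTwoConnected) (a b : V) : ∃ c, c ≠ a ∧ c ≠ b := by
  have := h2.finite
  by_contra! h
  have hsurj : Function.Surjective ![a, b] := fun c => by
    rcases eq_or_ne c a with rfl | hca
    · exact ⟨0, rfl⟩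
    · exact ⟨1, (h c hca).symm⟩
  have := Nat.card_le_card_of_surjective _ hsurj
  have := h2.1
  simp only [Nat.card_eq_fintype_card, Fintype.card_fin] at *
  omega

lemma reachable_deleteIncidenceSet (h2 : G.IsTwoConnected) {w a b : V} (ha : a ≠ w) (hb : b ≠ w) :
    (G.deleteIncidenceSet w).Reachable a b :=
  (reachable_induce_ne_iff ha hb).1 ((h2.2 w).preconnected _ _)

lemma reachable (h2 : G.IsTwoConnected) (a b : V) : G.Reachable a b := by
  obtain ⟨c, hca, hcb⟩ := h2.exists_ne_ne a b
  exact (h2.reachable_deleteIncidenceSet hca.symm hcb.symm).mono (G.deleteIncidenceSet_le c)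

lemma exists_isCycle_mem_edges (h2 : G.IsTwoConnected) {x y : V} (hxy : G.Adj x y) :
    ∃ (r : V) (c : G.Walk r r), c.IsCycle ∧ s(x, y) ∈ c.edges := by
  obtain ⟨c, hcx, hcy⟩ := h2.exists_ne_ne x y
  refine adj_and_reachable_delete_edges_iff_exists_cycle.1 ⟨hxy, ?_⟩
  exact ((h2.reachable_deleteIncidenceSet hxy.ne hcy).mono
    (deleteIncidenceSet_le_deleteEdges (Sym2.mem_mk_right x y))).trans
    ((h2.reachable_deleteIncidenceSet hcx hxy.ne').mono
    (deleteIncidenceSet_le_deleteEdges (Sym2.mem_mk_left x y)))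

lemma exists_isCycle_of_isCycle_of_adj (h2 : G.IsTwoConnected) {r x y z : V} {c : G.Walk r r}
    (hc : c.IsCycle) (hx : x ∈ c.support) (hy : y ∈ c.support) (hxy : x ≠ y) (hyz : G.Adj y z) :
    ∃ (r' : V) (c' : G.Walk r' r'), c'.IsCycle ∧ x ∈ c'.support ∧ z ∈ c'.support := by
  classical
  by_cases hz : z ∈ c.support
  · exact ⟨r, c, hc, hx, hz⟩
  -- The new cycle is `y → z`, then a path from `z` to the first vertex `w` of `c` it meets, then
  -- the arc of `c` from `w` back to `y` that passes `x`.
  obtain ⟨Q, hQ⟩ := (h2.reachable_deleteIncidenceSet hyz.ne' hxy).exists_isPath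
  have hyQ : y ∉ (Q.mapLe (G.deleteIncidenceSet_le y)).support := by
    rw [support_mapLe_eq_support]
    exact Q.notMem_support_of_deleteIncidenceSet hyz.ne'
  obtain ⟨w, hwc, hwQ, hfirst⟩ :=
    (Q.mapLe (G.deleteIncidenceSet_le y)).exists_mem_support_forall_mem_support_imp_eq
      c.support.toFinset ⟨x, by simp [hx]⟩
  rw [List.mem_toFinset] at hwc
  have hwy : w ≠ y := fun h => hyQ (h ▸ hwQ)
  obtain ⟨p, hp, hxp, hpc⟩ := hc.exists_isPath_mem_support hx hy hwc hwy
  refine ⟨y, _, isCycle_cons_append hyz ((hQ.mapLe _).takeUntil hwQ) hp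
    (fun h => hz (h ▸ hwc)) hwy fun t htq htp => hfirst t (by simpa using hpc htp) htq, ?_, ?_⟩
  · exact (mem_support_append_iff _ _).2 (Or.inr hxp)
  · simp

theorem exists_isCycle_mem_support (h2 : G.IsTwoConnected) {x y : V} (hxy : x ≠ y) :
    ∃ (r : V) (c : G.Walk r r), c.IsCycle ∧ x ∈ c.support ∧ y ∈ c.support := by
  obtain ⟨p⟩ := h2.reachable y x
  induction p with
  | nil => exact absurd rfl hxy
  | @cons y y' x h p ih =>
    by_cases hy' : x = y'
    · subst hy'
      obtain ⟨r, c, hc, he⟩ := h2.exists_isCycle_mem_edges h.symm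
      exact ⟨r, c, hc, c.fst_mem_support_of_mem_edges he, c.snd_mem_support_of_mem_edges he⟩
    · obtain ⟨r, c, hc, hx, hy⟩ := ih hy'
      exact h2.exists_isCycle_of_isCycle_of_adj hc hx hy hy' h.symm

lemma edgeSet_nonempty (h2 : G.IsTwoConnected) : G.edgeSet.Nonempty := by
  have := h2.finite
  obtain ⟨a⟩ : Nonempty V := Nat.card_pos_iff.1 (by have := h2.1; omega) |>.1
  obtain ⟨b, hba, -⟩ := h2.exists_ne_ne a a
  obtain ⟨r, c, hc, -⟩ := h2.exists_isCycle_mem_support hba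
  exact ⟨s(r, c.snd), c.adj_snd hc.not_nil⟩

end IsTwoConnected

def AllCyclesThroughContain (G : SimpleGraph V) (x y : V) (e : Sym2 V) : Prop :=
  ∀ (r : V) (c : G.Walk r r), c.IsCycle → x ∈ c.support → y ∈ c.support → e ∈ c.edges

/-- `a` and `b` lie in different components of `G - w - e` (deleting the edges at `w` isolates
it). -/
structure Separates (G : SimpleGraph V) (w : V) (e : Sym2 V) (a b : V) : Prop where
  left_ne : a ≠ w
  right_ne : b ≠ w
  not_reachable : ¬((G.deleteIncidenceSet w).deleteEdges {e}).Reachable a b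

namespace Separates

variable {w w' a b c : V} {e e' : Sym2 V}

lemma symm (h : G.Separates w e a b) : G.Separates w e b a :=
  ⟨h.right_ne, h.left_ne, fun h' => h.not_reachable h'.symm⟩

lemma ne (h : G.Separates w e a b) : a ≠ b := by
  rintro rfl
  exact h.not_reachable (Reachable.refl a)

lemma of_not_separates (h : G.Separates w e a c) (hab : ¬G.Separates w e a b) (hb : b ≠ w) :
    G.Separates w e b c := by
  refine ⟨hb, h.right_ne, fun hbc => h.not_reachable (Reachable.trans ?_ hbc)⟩
  by_contra hr
  exact hab ⟨h.left_ne, hb, hr⟩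

lemma left_or_right (h : G.Separates w e a b) (hc : c ≠ w) :
    G.Separates w e a c ∨ G.Separates w e c b := by
  by_contra! hn
  exact hn.2 (h.of_not_separates hn.1 hc)

lemma allCyclesThroughContain (h : G.Separates w e a b) : G.AllCyclesThroughContain a b e := by
  intro r c hc ha hb
  by_contra he
  obtain ⟨p, hpw, hpc⟩ := hc.exists_walk_notMem_support ha hb h.left_ne h.right_ne
  refine h.not_reachable ⟨p.transfer _ fun e' he' => ?_⟩
  rw [edgeSet_deleteEdges, edgeSet_deleteIncidenceSet]
  refine ⟨⟨p.edges_subset_edgeSet he', fun hw => hpw (mem_support_of_mem_edges he' hw.2)⟩, ?_⟩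
  rintro rfl
  exact he (hpc he')

lemma exists_separates_separates (hf : G.Separates w e a b) (ha : a ≠ w') (hb : b ≠ w')
    {c d : V} (hg : G.Separates w' e' c d) (hc : c ≠ w) (hd : d ≠ w) :
    ∃ x y, G.Separates w e x y ∧ G.Separates w' e' x y := by
  by_cases hab : G.Separates w' e' a b
  · exact ⟨a, b, hf, hab⟩
  obtain ⟨t, htw, hat⟩ : ∃ t, t ≠ w ∧ G.Separates w' e' a t := by
    rcases hg.left_or_right ha with h | h
    exacts [⟨c, hc, h.symm⟩, ⟨d, hd, h⟩]
  rcases hf.left_or_right htw with h | h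
  · exact ⟨a, t, h, hat⟩
  · exact ⟨t, b, h, (hat.of_not_separates hab hb).symm⟩

/-- If every pair separated by `w` and `s(u, v)` meets `w'`, then `u = w'` (say) is cut off from
all vertices but `v` and `w`, so every cycle through `u` uses `s(u, v)` and hence passes `v`. -/
lemma exists_of_forall_eq_or_eq {u v : V} (hf : G.Separates w s(u, v) u v)
    (hg : G.Separates w' e a b) (hdeg : ∀ x y, G.Separates w s(u, v) x y → x = w' ∨ y = w') :
    ∃ x y, x ≠ y ∧ G.AllCyclesThroughContain x y s(u, v) ∧ G.AllCyclesThroughContain x y e := by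
  wlog hu : u = w' generalizing u v
  · have hv : v = w' := (hdeg u v hf).resolve_left hu
    rw [Sym2.eq_swap] at hf hdeg ⊢
    exact this hf.symm hdeg hv
  subst hu
  have hforce : ∀ (r : V) (c : G.Walk r r), c.IsCycle → u ∈ c.support → s(u, v) ∈ c.edges := by
    intro r c hc hu
    obtain ⟨x, hx, hxu, hxw⟩ := hc.exists_mem_support_ne_ne u w
    rcases hf.left_or_right hxw with h | h
    · exact h.allCyclesThroughContain r c hc hu hx
    · exact absurd ((hdeg x v h).resolve_left hxu) hf.ne.symm
  obtain ⟨y, hyu, hvy⟩ : ∃ y, y ≠ u ∧ G.Separates u e v y := by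
    rcases hg.left_or_right hf.ne.symm with h | h
    exacts [⟨a, hg.left_ne, h.symm⟩, ⟨b, hg.right_ne, h⟩]
  refine ⟨u, y, hyu.symm, fun r c hc hu _ => hforce r c hc hu, fun r c hc hu hy => ?_⟩
  exact hvy.allCyclesThroughContain r c hc (c.snd_mem_support_of_mem_edges (hforce r c hc hu)) hy

end Separates

lemma IsTwoConnected.exists_separates (h2 : G.IsTwoConnected) {u v : V}
    (h : ¬(G.deleteEdges {s(u, v)}).IsTwoConnected) : ∃ w, G.Separates w s(u, v) u v := by
  simp only [IsTwoConnected, not_and, not_forall] at h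
  obtain ⟨w, hw⟩ := h h2.1
  obtain ⟨a, haw, -⟩ := h2.exists_ne_ne w w
  obtain ⟨⟨a, ha⟩, ⟨b, hb⟩, hab⟩ : ∃ a b : {x // x ≠ w},
      ¬((G.deleteEdges {s(u, v)}).induce {x | x ≠ w}).Reachable a b := by
    by_contra! hr
    exact hw ((connected_iff _).2 ⟨hr, ⟨⟨a, haw⟩⟩⟩)
  rw [reachable_induce_ne_iff, deleteIncidenceSet_deleteEdges] at hab
  by_contra! hno
  refine hab ((h2.reachable_deleteIncidenceSet ha hb).deleteEdges_singleton fun hadj => ?_)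
  by_contra hr
  exact hno w ⟨(deleteIncidenceSet_adj.1 hadj).2.1, (deleteIncidenceSet_adj.1 hadj).2.2, hr⟩

theorem IsTwoConnected.exists_allCyclesThroughContain (h2 : G.IsTwoConnected) {f g : Sym2 V}
    (hf : ¬(G.deleteEdges {f}).IsTwoConnected) (hg : ¬(G.deleteEdges {g}).IsTwoConnected) :
    ∃ x y, x ≠ y ∧ G.AllCyclesThroughContain x y f ∧ G.AllCyclesThroughContain x y g := by
  induction f using Sym2.ind with | _ u v => ?_
  induction g using Sym2.ind with | _ u' v' => ?_
  obtain ⟨w, hsf⟩ := h2.exists_separates hf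
  obtain ⟨w', hsg⟩ := h2.exists_separates hg
  by_cases hdf : ∀ x y, G.Separates w s(u, v) x y → x = w' ∨ y = w'
  · exact hsf.exists_of_forall_eq_or_eq hsg hdf
  by_cases hdg : ∀ x y, G.Separates w' s(u', v') x y → x = w ∨ y = w
  · obtain ⟨x, y, hxy, hg, hf⟩ := hsg.exists_of_forall_eq_or_eq hsf hdg
    exact ⟨x, y, hxy, hf, hg⟩
  push Not at hdf hdg
  obtain ⟨a, b, hab, ha, hb⟩ := hdf
  obtain ⟨c, d, hcd, hc, hd⟩ := hdg
  obtain ⟨x, y, hx, hy⟩ := hab.exists_separates_separates ha hb hcd hc hd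
  exact ⟨x, y, hx.ne, hx.allCyclesThroughContain, hy.allCyclesThroughContain⟩

lemma IsTwoConnected.isRainbowCycleColoring_two {H : SimpleGraph V} (hH : H.IsTwoConnected)
    (hHG : H ≤ G) {φ : Sym2 V → ℕ} (hφ : Set.InjOn φ H.edgeSet) :
    G.IsRainbowCycleColoring 2 φ := by
  classical
  intro S hS
  obtain ⟨x, y, hxy, rfl⟩ := Finset.card_eq_two.1 hS
  obtain ⟨r, c, hc, hx, hy⟩ := hH.exists_isCycle_mem_support hxy
  refine ⟨r, c.mapLe hHG, hc.mapLe hHG, by simp [hx, hy], ?_⟩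
  rw [edges_mapLe_eq_edges]
  exact hc.isTrail.edges_nodup.map_on fun e he e' he' =>
    hφ (c.edges_subset_edgeSet he) (c.edges_subset_edgeSet he')

lemma IsTwoConnected.exists_isRainbowCycleColoring_two {H : SimpleGraph V}
    (hH : H.IsTwoConnected) (hHG : H ≤ G) :
    ∃ φ : Sym2 V → ℕ, (∀ e ∈ G.edgeSet, φ e < H.numEdges) ∧ G.IsRainbowCycleColoring 2 φ := by
  classical
  have := hH.finite
  have : Nonempty H.edgeSet := hH.edgeSet_nonempty.to_subtype
  let φ : Sym2 V → ℕ := fun e => if h : e ∈ H.edgeSet then Finite.equivFin H.edgeSet ⟨e, h⟩ else 0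
  refine ⟨φ, fun e _ => ?_, hH.isRainbowCycleColoring_two hHG fun e he e' he' hee => ?_⟩
  · by_cases h : e ∈ H.edgeSet
    · simp only [φ, dif_pos h]
      exact Fin.isLt _
    · simp only [φ, dif_neg h]
      exact Nat.card_pos
  · simp only [φ, dif_pos he, dif_pos he'] at hee
    exact congrArg Subtype.val ((Finite.equivFin _).injective (Fin.ext hee))

lemma IsTwoConnected.crx_two_le_numEdges {H : SimpleGraph V} (hH : H.IsTwoConnected)
    (hHG : H ≤ G) : G.crx 2 ≤ H.numEdges :=
  Nat.sInf_le (hH.exists_isRainbowCycleColoring_two hHG)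

lemma numEdges_le_of_isRainbowCycleColoring_two
    (hforce : ∀ f ∈ G.edgeSet, ∀ g ∈ G.edgeSet,
      ∃ x y, x ≠ y ∧ G.AllCyclesThroughContain x y f ∧ G.AllCyclesThroughContain x y g)
    {φ : Sym2 V → ℕ} {n : ℕ} (hlt : ∀ e ∈ G.edgeSet, φ e < n)
    (hφ : G.IsRainbowCycleColoring 2 φ) : G.numEdges ≤ n := by
  have hinj : Set.InjOn φ G.edgeSet := by
    classical
    intro f hf g hg hfg
    obtain ⟨x, y, hxy, hxf, hxg⟩ := hforce f hf g hg
    obtain ⟨r, c, hc, hS, hnd⟩ := hφ {x, y} (Finset.card_pair hxy)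
    have hx := hS x (by simp)
    have hy := hS y (by simp)
    exact List.inj_on_of_nodup_map hnd (hxf r c hc hx hy) (hxg r c hc hx hy) hfg
  calc G.numEdges = G.edgeSet.ncard := Nat.card_coe_set_eq _
    _ ≤ (Set.Iio n).ncard := Set.ncard_le_ncard_of_injOn φ hlt hinj (Set.finite_Iio n)
    _ = n := Set.ncard_Iio_nat n

lemma numEdges_le_crx_two (h2 : G.IsTwoConnected)
    (hforce : ∀ f ∈ G.edgeSet, ∀ g ∈ G.edgeSet,
      ∃ x y, x ≠ y ∧ G.AllCyclesThroughContain x y f ∧ G.AllCyclesThroughContain x y g) :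
    G.numEdges ≤ G.crx 2 := by
  have hne : {r | ∃ φ : Sym2 V → ℕ, (∀ e ∈ G.edgeSet, φ e < r) ∧
      G.IsRainbowCycleColoring 2 φ}.Nonempty := ⟨_, h2.exists_isRainbowCycleColoring_two le_rfl⟩
  obtain ⟨φ, hlt, hφ⟩ := Nat.sInf_mem hne
  exact numEdges_le_of_isRainbowCycleColoring_two hforce hlt hφ

lemma numEdges_deleteEdges_singleton [Finite G.edgeSet] {e : Sym2 V} (he : e ∈ G.edgeSet) :
    (G.deleteEdges {e}).numEdges = G.numEdges - 1 := by
  simp only [numEdges, Nat.card_coe_set_eq, edgeSet_deleteEdges,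
    Set.ncard_sdiff_singleton_of_mem he]

end SimpleGraph

theorem crx_two_eq_numEdges_iff_minimally_two_connected_general
    {V : Type*} (G : SimpleGraph V)
    (h2 : G.IsTwoConnected) :
    G.crx 2 = G.numEdges ↔
      ∀ e ∈ G.edgeSet, ¬ (G.deleteEdges {e}).IsTwoConnected := by
  have := h2.finite
  refine ⟨fun hcrx e he he2 => ?_, fun hmin => ?_⟩
  · have hle := he2.crx_two_le_numEdges (G.deleteEdges_le _)
    have : Nonempty G.edgeSet := ⟨⟨e, he⟩⟩
    have : 0 < G.numEdges := Nat.card_pos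
    rw [numEdges_deleteEdges_singleton he] at hle
    omega
  · exact le_antisymm (h2.crx_two_le_numEdges le_rfl) (numEdges_le_crx_two h2 fun f hf g hg =>
      h2.exists_allCyclesThroughContain (hmin f hf) (hmin g hg))

/-- for a 2-connected G of order n ≥ 3, crx_2(G) = e(G) iff G is
minimally 2-connected. -/
theorem crx_two_eq_numEdges_iff_minimally_two_connected
    {V : Type*} [Fintype V] (G : SimpleGraph V) (hn : 3 ≤ Fintype.card V)
    (h2 : G.IsTwoConnected) :
    G.crx 2 = G.numEdges ↔
      ∀ e ∈ G.edgeSet, ¬ (G.deleteEdges {e}).IsTwoConnected :=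
  crx_two_eq_numEdges_iff_minimally_two_connected_general G h2
end

section
/- Let G be a Hamiltonian graph of order n ≥ 3 and 1 ≤ k ≤ n. Then crx_k(G) = e(G) if and only if G is the cycle C_n. -/
open SimpleGraph

/-!
Colouring the edges of a Hamiltonian cycle by their positions on it is a `k`-rainbow cycle
colouring with `n` colours, so `crx_k(G) ≤ n ≤ e(G)`. If `crx_k(G) = e(G)`, then `e(G) = n`, so
the Hamiltonian cycle, a copy of `C_n` on all `n` vertices, uses every edge and `G ≅ C_n`.
Conversely, every cycle of `C_n` is spanning (`C_n` is connected and `2`-regular), so a rainbow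
cycle needs `n` colours and `crx_k(C_n) = n = e(C_n)`.
-/

namespace SimpleGraph

variable {V W : Type*} {G : SimpleGraph V} {H : SimpleGraph W}

namespace Walk

lemma IsCycle.isHamiltonianCycle_of_mem [DecidableEq V] {u : V} {c : G.Walk u u}
    (hc : c.IsCycle) (hall : ∀ v, v ∈ c.support) : c.IsHamiltonianCycle := by
  refine ⟨hc, hc.isPath_tail.isHamiltonian_of_mem fun v => ?_⟩
  have hv := hall v
  rw [← cons_support_tail hc.not_nil, List.mem_cons] at hv
  rcases hv with rfl | hv
  · exact c.tail.end_mem_support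
  · exact hv

/-- The two cycle edges at a vertex of the cycle exhaust its degree, so the support of the cycle
is closed under adjacency. -/
lemma IsCycle.mem_support_of_degree_le_two [G.LocallyFinite] (hG : G.Preconnected)
    (hdeg : ∀ v, G.degree v ≤ 2) {u : V} {c : G.Walk u u} (hc : c.IsCycle) (w : V) :
    w ∈ c.support := by
  have hclosed : ∀ v ∈ c.support, ∀ w, G.Adj v w → w ∈ c.support := by
    intro v hv w hvw
    have hnbr : c.toSubgraph.neighborSet v = G.neighborSet v :=
      Set.eq_of_subset_of_ncard_le (c.toSubgraph.neighborSet_subset v) (by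
        rw [hc.ncard_neighborSet_toSubgraph_eq_two hv, Set.ncard_eq_toFinset_card']
        exact hdeg v) (Set.toFinite _)
    rw [← mem_verts_toSubgraph]
    exact c.toSubgraph.neighborSet_subset_verts v (hnbr ▸ hvw)
  by_contra hw
  obtain ⟨d, -, hd, hd'⟩ :=
    (hG u w).some.exists_boundary_dart {v | v ∈ c.support} c.start_mem_support hw
  exact hd' (hclosed _ hd _ d.adj)

end Walk

lemma IsHamiltonianGraph.exists_isHamiltonianCycle [DecidableEq V]
    (hG : G.IsHamiltonianGraph) : ∃ (u : V) (c : G.Walk u u), c.IsHamiltonianCycle :=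
  let ⟨u, c, hc, hall⟩ := hG
  ⟨u, c, hc.isHamiltonianCycle_of_mem hall⟩

lemma cycleGraph.le_length_of_isCycle {n : ℕ} {u : Fin n} {c : (cycleGraph n).Walk u u}
    (hc : c.IsCycle) : n ≤ c.length := by
  rcases lt_or_ge n 3 with hn | hn
  · exact hn.le.trans hc.three_le_length
  obtain ⟨m, rfl⟩ : ∃ m, n = m + 3 := ⟨n - 3, by omega⟩
  have hham := hc.isHamiltonianCycle_of_mem
    (hc.mem_support_of_degree_le_two cycleGraph_preconnected
      fun _ => cycleGraph_degree_three_le.le)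
  simpa using hham.length_eq.ge

lemma numEdges_cycleGraph {n : ℕ} (hn : 3 ≤ n) : (cycleGraph n).numEdges = n := by
  obtain ⟨m, rfl⟩ : ∃ m, n = m + 3 := ⟨n - 3, by omega⟩
  have h := sum_degrees_eq_twice_card_edges (cycleGraph (m + 3))
  simp only [cycleGraph_degree_three_le, Finset.sum_const, Finset.card_univ, Fintype.card_fin,
    smul_eq_mul] at h
  rw [numEdges, Nat.card_eq_fintype_card, ← edgeFinset_card]
  omega

lemma Iso.numEdges_eq (f : G ≃g H) : G.numEdges = H.numEdges :=
  Nat.card_congr f.mapEdgeSet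

lemma Copy.numEdges_le [Finite W] (f : Copy G H) : G.numEdges ≤ H.numEdges :=
  Nat.card_le_card_of_injective _ f.mapEdgeSet.injective

noncomputable def Copy.isoOfCardEq [Finite W] (f : Copy G H) (hV : Nat.card V = Nat.card W)
    (hE : G.numEdges = H.numEdges) : G ≃g H where
  toEquiv := Equiv.ofBijective f (f.injective.bijective_of_nat_card_le hV.ge)
  map_rel_iff' := by
    intro a b
    refine ⟨fun hab => ?_, f.toHom.map_adj⟩
    obtain ⟨⟨e, he⟩, hfe⟩ :=
      (f.mapEdgeSet.injective.bijective_of_nat_card_le hE.ge).2 ⟨s(f a, f b), hab⟩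
    have hmap : Sym2.map f e = Sym2.map f s(a, b) := congrArg Subtype.val hfe
    rwa [Sym2.map.injective f.injective hmap, mem_edgeSet] at he

lemma crx_le {k r : ℕ} (h : ∃ φ : Sym2 V → ℕ, (∀ e ∈ G.edgeSet, φ e < r) ∧
    G.IsRainbowCycleColoring k φ) : G.crx k ≤ r :=
  Nat.sInf_le h

lemma exists_isRainbowCycleColoring_lt_crx {k r : ℕ} (h : ∃ φ : Sym2 V → ℕ,
    (∀ e ∈ G.edgeSet, φ e < r) ∧ G.IsRainbowCycleColoring k φ) :
    ∃ φ : Sym2 V → ℕ, (∀ e ∈ G.edgeSet, φ e < G.crx k) ∧ G.IsRainbowCycleColoring k φ :=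
  Nat.sInf_mem (s := {r | ∃ φ : Sym2 V → ℕ, (∀ e ∈ G.edgeSet, φ e < r) ∧
    G.IsRainbowCycleColoring k φ}) ⟨r, h⟩

lemma Walk.IsHamiltonianCycle.exists_isRainbowCycleColoring [DecidableEq V] {u : V}
    {c : G.Walk u u} (hc : c.IsHamiltonianCycle) (k : ℕ) :
    ∃ φ : Sym2 V → ℕ, (∀ e ∈ G.edgeSet, φ e < c.length) ∧ G.IsRainbowCycleColoring k φ := by
  refine ⟨fun e => if e ∈ c.edges then c.edges.idxOf e else 0, fun e _ => ?_,
    fun _ _ => ⟨u, c, hc.isCycle, fun v _ => hc.mem_support v, ?_⟩⟩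
  · dsimp only
    split_ifs with he
    · simpa using List.idxOf_lt_length_iff.2 he
    · exact hc.isCycle.three_le_length.trans_lt' (by omega)
  · refine hc.isCycle.edges_nodup.map_on fun a ha b hb hab => ?_
    simp only [if_pos ha, if_pos hb] at hab
    exact (List.idxOf_inj ha).1 hab

lemma IsRainbowCycleColoring.exists_isCycle_length_le [Fintype V] {k r : ℕ} {φ : Sym2 V → ℕ}
    (hφ : G.IsRainbowCycleColoring k φ) (hr : ∀ e ∈ G.edgeSet, φ e < r)
    (hk : k ≤ Fintype.card V) : ∃ (u : V) (c : G.Walk u u), c.IsCycle ∧ c.length ≤ r := by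
  obtain ⟨S, -, hS⟩ := Finset.exists_subset_card_eq (s := Finset.univ) hk
  obtain ⟨u, c, hc, -, hnd⟩ := hφ S hS
  have hsub : (c.edges.map φ).toFinset ⊆ Finset.range r := by
    intro a ha
    obtain ⟨e, he, rfl⟩ := List.mem_map.1 (List.mem_toFinset.1 ha)
    exact Finset.mem_range.2 (hr e (c.edges_subset_edgeSet he))
  refine ⟨u, c, hc, ?_⟩
  calc c.length = (c.edges.map φ).toFinset.card := by
        rw [List.toFinset_card_of_nodup hnd, List.length_map, Walk.length_edges]
    _ ≤ r := by simpa using Finset.card_le_card hsub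

end SimpleGraph

theorem crx_k_eq_numEdges_iff_cycle_of_hamiltonian_general
    {V : Type*} [Fintype V] (G : SimpleGraph V) (hn : 3 ≤ Fintype.card V)
    (hG : G.IsHamiltonianGraph) (k : ℕ) (hkn : k ≤ Fintype.card V) :
    G.crx k = G.numEdges ↔ Nonempty (G ≃g SimpleGraph.cycleGraph (Fintype.card V)) := by
  classical
  obtain ⟨u, c, hc⟩ := hG.exists_isHamiltonianCycle
  have hcol := hc.exists_isRainbowCycleColoring k
  have hcrx : G.crx k ≤ Fintype.card V := hc.length_eq ▸ crx_le hcol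
  have hCn := numEdges_cycleGraph hn
  obtain ⟨f⟩ : cycleGraph (Fintype.card V) ⊑ G :=
    (cycleGraph_isContained_iff hn).2 ⟨u, c, hc.isCycle, hc.length_eq⟩
  constructor
  · intro h
    have hle := f.numEdges_le
    exact ⟨(f.isoOfCardEq (by simp) (by omega)).symm⟩
  · rintro ⟨e⟩
    obtain ⟨φ, hφ, hrainbow⟩ := exists_isRainbowCycleColoring_lt_crx hcol
    obtain ⟨w, c', hc', hlen⟩ := hrainbow.exists_isCycle_length_le hφ hkn
    have hlen' : Fintype.card V ≤ c'.length := by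
      simpa using cycleGraph.le_length_of_isCycle (hc'.map (f := e.toHom) e.injective)
    have hE := e.numEdges_eq
    omega

/-- for a Hamiltonian G of order n ≥ 3 and 1 ≤ k ≤ n,
crx_k(G) = e(G) iff G is the cycle C_n. -/
theorem crx_k_eq_numEdges_iff_cycle_of_hamiltonian
    {V : Type*} [Fintype V] (G : SimpleGraph V) (hn : 3 ≤ Fintype.card V)
    (hG : G.IsHamiltonianGraph) (k : ℕ) (hk1 : 1 ≤ k) (hkn : k ≤ Fintype.card V) :
    G.crx k = G.numEdges ↔ Nonempty (G ≃g SimpleGraph.cycleGraph (Fintype.card V)) :=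
  crx_k_eq_numEdges_iff_cycle_of_hamiltonian_general G hn hG k hkn
end

section
/- If P10 is the Petersen graph, then crx_9(P10) = e(P10) = 15; that is, in any edge-colouring of the Petersen graph with fewer than 15 colours, there exist 9 vertices not all contained in any rainbow cycle. -/
open SimpleGraph

/-- The Petersen graph: vertices are the 2-subsets of a 5-set, adjacent iff disjoint. -/
def petersenGraph : SimpleGraph {s : Finset (Fin 5) // s.card = 2} :=
  SimpleGraph.fromRel (fun a b => Disjoint a.1 b.1)

/-!
Colouring the fifteen edges with distinct colours works because the Petersen graph `P` is
hypohamiltonian: nine vertices miss some vertex `v`, and a Hamiltonian cycle of `P - v` is rainbow.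

Conversely, let two distinct edges `e`, `f` share a colour, and pick a vertex `v` off `e` and `f`
adjacent to an end of each. A rainbow cycle through the nine vertices other than `v` avoids `v`,
because `P` is not Hamiltonian. As `P` is cubic, a neighbour of `v` on this cycle must use both of
its other edges, so `e` and `f` both lie on the cycle, contradicting rainbowness.
-/

namespace SimpleGraph

variable {V : Type*} {G : SimpleGraph V}

theorem CycleThrough.mono {S T : Set V} (h : G.CycleThrough T) (hST : S ⊆ T) :
    G.CycleThrough S :=
  let ⟨u, c, hc, hT⟩ := h
  ⟨u, c, hc, fun v hv => hT v (hST hv)⟩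

theorem CycleThrough.image {V' : Type*} {G' : SimpleGraph V'} {S : Set V} (h : G.CycleThrough S)
    (f : G ≃g G') : G'.CycleThrough (f '' S) := by
  obtain ⟨u, c, hc, hS⟩ := h
  refine ⟨f u, c.map f.toHom, hc.map f.injective, ?_⟩
  rintro _ ⟨v, hv, rfl⟩
  rw [Walk.support_map]
  exact List.mem_map_of_mem (hS v hv)

theorem cycleThrough_of_card_lt [Fintype V] (h : ∀ v, G.CycleThrough {v}ᶜ) {S : Finset V}
    (hS : S.card < Fintype.card V) : G.CycleThrough S := by
  obtain ⟨v, -, hv⟩ := Finset.exists_mem_notMem_of_card_lt_card (s := S) (t := Finset.univ)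
    (by rwa [Finset.card_univ])
  exact (h v).mono fun w hw hwv => hv (hwv ▸ hw)

theorem Walk.IsCycle.mem_edges_of_degree_le_three {u v w x : V} {c : G.Walk u u}
    [Fintype (G.neighborSet w)] (hc : c.IsCycle) (hw : w ∈ c.support) (hdeg : G.degree w ≤ 3)
    (hv : v ∉ c.support) (hwv : G.Adj w v) (hwx : G.Adj w x) (hxv : x ≠ v) :
    s(w, x) ∈ c.edges := by
  have hsub : c.toSubgraph.neighborSet w ⊆ G.neighborSet w \ {v} := fun y hy =>
    ⟨c.toSubgraph.adj_sub hy, fun hyv => hv (hyv ▸ c.mem_verts_toSubgraph.1 hy.snd_mem)⟩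
  have hdiff : (G.neighborSet w \ {v}).ncard ≤ 2 := by
    rw [Set.ncard_sdiff_singleton_of_mem (s := G.neighborSet w) hwv, Set.ncard_eq_toFinset_card',
      Set.toFinset_card, card_neighborSet_eq_degree]
    omega
  have heq := Set.eq_of_subset_of_ncard_le hsub
    (by rw [hc.ncard_neighborSet_toSubgraph_eq_two hw]; exact hdiff) (Set.toFinite _)
  rw [← Walk.adj_toSubgraph_iff_mem_edges, ← Subgraph.mem_neighborSet, heq]
  exact ⟨hwx, hxv⟩

theorem Walk.IsCycle.mem_edges_of_adj_of_notMem_support [G.LocallyFinite]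
    (hdeg : ∀ w, G.degree w ≤ 3) {u v : V} {c : G.Walk u u} (hc : c.IsCycle) (hv : v ∉ c.support)
    (hcov : ∀ w, w ≠ v → w ∈ c.support) {e : Sym2 V} (he : e ∈ G.edgeSet) (hve : v ∉ e)
    (hadj : ∃ y ∈ e, G.Adj y v) : e ∈ c.edges := by
  obtain ⟨y, hy, hyv⟩ := hadj
  obtain ⟨x, rfl⟩ := (Sym2.mem_iff_exists).1 hy
  have hxv : x ≠ v := fun h => hve (h ▸ Sym2.mem_mk_right y x)
  exact hc.mem_edges_of_degree_le_three (hcov y hyv.ne) (hdeg y) hv hyv he hxv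

theorem isRainbowCycleColoring_of_injOn {k : ℕ} {φ : Sym2 V → ℕ} (hφ : Set.InjOn φ G.edgeSet)
    (h : ∀ S : Finset V, S.card = k → G.CycleThrough S) : G.IsRainbowCycleColoring k φ := by
  intro S hS
  obtain ⟨u, c, hc, hcS⟩ := h S hS
  exact ⟨u, c, hc, hcS, hc.edges_nodup.map_on fun e he f hf =>
    hφ (c.edges_subset_edgeSet he) (c.edges_subset_edgeSet hf)⟩

theorem IsRainbowCycleColoring.injOn [Fintype V] [G.LocallyFinite] {φ : Sym2 V → ℕ}
    (hφ : G.IsRainbowCycleColoring (Fintype.card V - 1) φ) (hdeg : ∀ w, G.degree w ≤ 3)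
    (hG : ¬ G.IsHamiltonianGraph)
    (hedges : ∀ e ∈ G.edgeSet, ∀ f ∈ G.edgeSet, e ≠ f → ∃ v, v ∉ e ∧ v ∉ f ∧
      (∃ y ∈ e, G.Adj y v) ∧ ∃ y ∈ f, G.Adj y v) :
    Set.InjOn φ G.edgeSet := by
  classical
  intro e he f hf hef
  by_contra hne
  obtain ⟨v, hve, hvf, hadje, hadjf⟩ := hedges e he f hf hne
  obtain ⟨u, c, hc, hcov, hrainbow⟩ :=
    hφ (Finset.univ.erase v) (by rw [Finset.card_erase_of_mem (Finset.mem_univ v),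
      Finset.card_univ])
  have hcov' : ∀ w, w ≠ v → w ∈ c.support := fun w hw => hcov w (by simp [hw])
  have hv : v ∉ c.support := fun hv =>
    hG ⟨u, c, hc, fun w => if hw : w = v then hw ▸ hv else hcov' w hw⟩
  exact hne (List.inj_on_of_nodup_map hrainbow
    (hc.mem_edges_of_adj_of_notMem_support hdeg hv hcov' he hve hadje)
    (hc.mem_edges_of_adj_of_notMem_support hdeg hv hcov' hf hvf hadjf) hef)

theorem crx_eq_numEdges [Finite V] {k : ℕ} (hcyc : ∀ S : Finset V, S.card = k → G.CycleThrough S)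
    (hinj : ∀ φ, G.IsRainbowCycleColoring k φ → Set.InjOn φ G.edgeSet) :
    G.crx k = G.numEdges := by
  classical
  let enum := Finite.equivFin G.edgeSet
  let φ : Sym2 V → ℕ := fun e => if he : e ∈ G.edgeSet then enum ⟨e, he⟩ else 0
  have hφ : Set.InjOn φ G.edgeSet := fun e he f hf hef =>
    Subtype.ext_iff.1 (enum.injective (Fin.val_injective (by simpa [φ, he, hf] using hef)))
  have hmem : G.numEdges ∈ {r | ∃ φ : Sym2 V → ℕ, (∀ e ∈ G.edgeSet, φ e < r) ∧
      G.IsRainbowCycleColoring k φ} :=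
    ⟨φ, fun e he => by simp [φ, he, numEdges], isRainbowCycleColoring_of_injOn hφ hcyc⟩
  refine le_antisymm (Nat.sInf_le hmem) (le_csInf ⟨_, hmem⟩ ?_)
  rintro r ⟨ψ, hψ, hrainbow⟩
  calc G.numEdges = G.edgeSet.ncard := Nat.card_coe_set_eq _
    _ ≤ (Set.Iio r).ncard :=
      Set.ncard_le_ncard_of_injOn ψ hψ (hinj ψ hrainbow) (Set.finite_Iio r)
    _ = r := Set.ncard_Iio_nat r

variable (G) in
/-- `x` reaches `t` in `n + 1` steps through distinct inner vertices avoiding `vis`; unfolded,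
this is a depth-first search that `decide` can run. -/
def ExtendsToPath (t : V) : ℕ → V → List V → Prop
  | 0, x, _ => G.Adj x t
  | n + 1, x, vis => ∃ w, G.Adj x w ∧ w ∉ vis ∧ ExtendsToPath t n w (w :: vis)

instance decidableExtendsToPath [Fintype V] [DecidableEq V] [DecidableRel G.Adj] (t : V) :
    ∀ n x vis, Decidable (G.ExtendsToPath t n x vis)
  | 0, x, _ => inferInstanceAs (Decidable (G.Adj x t))
  | n + 1, x, vis =>
    have := fun w => decidableExtendsToPath t n w (w :: vis)
    inferInstanceAs (Decidable (∃ w, G.Adj x w ∧ w ∉ vis ∧ G.ExtendsToPath t n w (w :: vis)))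

theorem Walk.IsPath.extendsToPath {x t : V} {p : G.Walk x t} (hp : p.IsPath) {n : ℕ}
    (hn : p.length = n + 1) {vis : List V} (hvis : ∀ y ∈ vis, y ∈ p.support → y = x ∨ y = t) :
    G.ExtendsToPath t n x vis := by
  induction p generalizing n vis with
  | nil => simp at hn
  | @cons x w t hxw p ih =>
    have hp' : p.IsPath := hp.of_cons
    have hx : x ∉ p.support := ((Walk.cons_isPath_iff hxw p).1 hp).2
    cases n with
    | zero =>
      obtain rfl := Walk.eq_of_length_eq_zero (p := p) (by simpa using hn)
      exact hxw
    | succ m =>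
      have hwt : w ≠ t := by
        rintro rfl
        simp [Walk.length_eq_zero_iff.2 (Walk.isPath_iff_nil.1 hp')] at hn
      refine ⟨w, hxw, fun hw => ?_, ih hp' (by simpa using hn) ?_⟩
      · rcases hvis w hw (by simp) with rfl | rfl
        · exact hx p.start_mem_support
        · exact hwt rfl
      · rintro y (_ | ⟨_, hy⟩) hyp
        · exact .inl rfl
        · rcases hvis y hy (by simp [hyp]) with rfl | rfl
          · exact absurd hyp hx
          · exact .inr rfl

theorem not_isHamiltonianGraph_of_forall_not_extendsToPath [Fintype V] (u : V)
    (h : ∀ w, G.Adj u w → ¬ G.ExtendsToPath u (Fintype.card V - 2) w [u, w]) :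
    ¬ G.IsHamiltonianGraph := by
  classical
  rintro ⟨u', c, hc, hall⟩
  have hcycle : (c.rotate u (hall u)).IsCycle := hc.rotate _
  have hcov : ∀ v, v ∈ (c.rotate u (hall u)).support := fun v =>
    (c.mem_support_rotate_iff u _).2 (hall v)
  generalize c.rotate u (hall u) = d at hcycle hcov
  cases d with
  | nil => exact Walk.not_isCycle_nil hcycle
  | cons huw p =>
    have hp : p.IsPath := ((Walk.cons_isCycle_iff p huw).1 hcycle).1
    have hham : p.IsHamiltonian := hp.isHamiltonian_of_mem fun v => by
      rcases List.mem_cons.1 (hcov v) with rfl | hv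
      · exact p.end_mem_support
      · exact hv
    have hlen := hham.length_eq
    have h3 := hcycle.three_le_length
    simp only [Walk.length_cons] at h3
    exact h _ huw (hp.extendsToPath (by omega) (by simp [or_comm]))

end SimpleGraph

instance : DecidableRel petersenGraph.Adj := fun a b =>
  inferInstanceAs (Decidable (a ≠ b ∧ (Disjoint a.1 b.1 ∨ Disjoint b.1 a.1)))

def petersenVertex (a b : Fin 5) (hab : a ≠ b := by decide) :
    {s : Finset (Fin 5) // s.card = 2} :=
  ⟨{a, b}, Finset.card_pair hab⟩

theorem petersenGraph_isRegularOfDegree : petersenGraph.IsRegularOfDegree 3 := by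
  unfold IsRegularOfDegree
  decide

theorem petersenGraph_numEdges : petersenGraph.numEdges = 15 := by
  rw [numEdges, Nat.card_eq_fintype_card, ← edgeFinset_card]
  decide

set_option maxRecDepth 4096 in
theorem petersenGraph_not_isHamiltonianGraph : ¬ petersenGraph.IsHamiltonianGraph :=
  not_isHamiltonianGraph_of_forall_not_extendsToPath (petersenVertex 0 1) (by decide)

/- If the ends of `e` cover all of `Fin 5` but `i`, and those of `f` all but `j`, any vertex
containing `i` and `j` will do. -/
set_option synthInstance.maxSize 256 in
theorem petersenGraph_exists_adj_both_edges :
    ∀ e ∈ petersenGraph.edgeSet, ∀ f ∈ petersenGraph.edgeSet, e ≠ f → ∃ v, v ∉ e ∧ v ∉ f ∧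
      (∃ y ∈ e, petersenGraph.Adj y v) ∧ ∃ y ∈ f, petersenGraph.Adj y v := by
  decide

def petersenIso (σ : Equiv.Perm (Fin 5)) : petersenGraph ≃g petersenGraph where
  toEquiv := σ.finsetCongr.subtypeEquiv fun s => by simp [Equiv.finsetCongr_apply]
  map_rel_iff' {a b} := by
    simp [petersenGraph, Equiv.finsetCongr_apply, Finset.disjoint_map, Subtype.ext_iff]

theorem exists_petersenIso_apply_eq (v w : {s : Finset (Fin 5) // s.card = 2}) :
    ∃ σ, petersenIso σ v = w := by
  have := Set.powersetCard.isPretransitive (α := Fin 5) (n := 2)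
  obtain ⟨σ, hσ⟩ := MulAction.exists_smul_eq (Equiv.Perm (Fin 5))
    (⟨v.1, v.2⟩ : Set.powersetCard (Fin 5) 2) ⟨w.1, w.2⟩
  refine ⟨σ, Subtype.ext ?_⟩
  simpa [petersenIso, Equiv.finsetCongr_apply, Finset.map_eq_image, Finset.smul_finset_def]
    using congrArg Subtype.val hσ

def petersenNineCycle : petersenGraph.Walk (petersenVertex 0 1) (petersenVertex 0 1) :=
  Walk.cons (show petersenGraph.Adj (petersenVertex 0 1) (petersenVertex 2 3) by decide) <|
    Walk.ofSupport [petersenVertex 2 3, petersenVertex 0 4, petersenVertex 1 2,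
      petersenVertex 0 3, petersenVertex 1 4, petersenVertex 0 2, petersenVertex 1 3,
      petersenVertex 2 4, petersenVertex 0 1] (by simp) (by decide)

theorem petersenNineCycle_isCycle : petersenNineCycle.IsCycle :=
  (Walk.cons_isCycle_iff _ _).2 ⟨(Walk.isPath_def _).2 (by decide), by decide⟩

theorem petersenGraph_cycleThrough_compl_singleton (v : {s : Finset (Fin 5) // s.card = 2}) :
    petersenGraph.CycleThrough {v}ᶜ := by
  have hmiss : petersenGraph.CycleThrough {petersenVertex 3 4}ᶜ :=
    ⟨_, petersenNineCycle, petersenNineCycle_isCycle, by decide⟩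
  obtain ⟨σ, rfl⟩ := exists_petersenIso_apply_eq (petersenVertex 3 4) v
  simpa [Set.image_compl_eq (petersenIso σ).bijective] using hmiss.image (petersenIso σ)

/-- crx_9 of the Petersen graph equals its number of edges, namely 15. -/
theorem crx_nine_petersen :
    petersenGraph.crx 9 = petersenGraph.numEdges ∧ petersenGraph.numEdges = 15 := by
  have hcard : Fintype.card {s : Finset (Fin 5) // s.card = 2} = 10 := by decide
  refine ⟨crx_eq_numEdges (fun S hS => ?_) fun φ hφ => ?_, petersenGraph_numEdges⟩
  · exact cycleThrough_of_card_lt petersenGraph_cycleThrough_compl_singleton (by omega)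
  · exact IsRainbowCycleColoring.injOn (by rwa [hcard])
      (fun w => (petersenGraph_isRegularOfDegree w).le) petersenGraph_not_isHamiltonianGraph
      petersenGraph_exists_adj_both_edges
end

section
/- crx_1(W_n) = 3 for every n ≥ 3, where W_n is the wheel on n+1 vertices. -/
open SimpleGraph

/-- The wheel `W_n`: a centre vertex `none` joined to every vertex of the cycle `C_n`. -/
def wheelGraph (n : ℕ) : SimpleGraph (Option (Fin n)) :=
  SimpleGraph.fromRel (fun u v =>
    u = none ∨ ∃ a b : Fin n, u = some a ∧ v = some b ∧ (SimpleGraph.cycleGraph n).Adj a b)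

/-!
A rainbow cycle has at least three edges, hence needs three colours. Conversely, colour the spoke
to the `a`-th rim vertex by the parity of `a` and every rim edge by a third colour: for `a + 1 < n`
the triangle formed by the centre and the rim vertices `a`, `a + 1` is then rainbow, and every
vertex of the wheel lies on such a triangle.
-/

namespace SimpleGraph

variable {V : Type*} {G : SimpleGraph V}

theorem Walk.IsCycle.three_le_of_rainbow {u : V} {c : G.Walk u u} (hc : c.IsCycle)
    {φ : Sym2 V → ℕ} {r : ℕ} (hφ : ∀ e ∈ G.edgeSet, φ e < r) (hrainbow : (c.edges.map φ).Nodup) :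
    3 ≤ r := by
  have hsub : (c.edges.map φ).toFinset ⊆ Finset.range r := by
    simp only [Finset.subset_iff, List.mem_toFinset, List.mem_map, Finset.mem_range]
    rintro _ ⟨e, he, rfl⟩
    exact hφ e (c.edges_subset_edgeSet he)
  have hcard := Finset.card_le_card hsub
  rw [List.toFinset_card_of_nodup hrainbow, Finset.card_range, List.length_map,
    Walk.length_edges] at hcard
  exact hc.three_le_length.trans hcard

theorem exists_rainbow_triangle {φ : Sym2 V → ℕ} {x y z : V} (hxy : G.Adj x y)
    (hyz : G.Adj y z) (hzx : G.Adj z x) (hφ : [φ s(x, y), φ s(y, z), φ s(z, x)].Nodup) :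
    ∃ c : G.Walk x x, c.IsCycle ∧ c.support = [x, y, z, x] ∧ (c.edges.map φ).Nodup := by
  refine ⟨.cons hxy (.cons hyz (.cons hzx .nil)), ?_, rfl, hφ⟩
  simp only [List.nodup_cons, List.mem_cons, List.not_mem_nil, or_false] at hφ
  rw [Walk.cons_isCycle_iff]
  refine ⟨?_, ?_⟩
  · simp [hyz.ne, hzx.ne, hxy.ne.symm]
  · simp only [Walk.edges_cons, Walk.edges_nil, List.mem_cons, List.not_mem_nil, or_false]
    rintro (h | h) <;> simp_all

theorem isRainbowCycleColoring_one_iff {φ : Sym2 V → ℕ} :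
    G.IsRainbowCycleColoring 1 φ ↔
      ∀ v, ∃ (u : V) (c : G.Walk u u), c.IsCycle ∧ v ∈ c.support ∧ (c.edges.map φ).Nodup := by
  simp [IsRainbowCycleColoring, Finset.card_eq_one]

theorem IsRainbowCycleColoring.three_le {k r : ℕ} {φ : Sym2 V → ℕ}
    (h : G.IsRainbowCycleColoring k φ) (hφ : ∀ e ∈ G.edgeSet, φ e < r) {S : Finset V}
    (hS : S.card = k) : 3 ≤ r := by
  obtain ⟨_, c, hc, -, hrainbow⟩ := h S hS
  exact hc.three_le_of_rainbow hφ hrainbow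

theorem crx_eq_three {k : ℕ} (hk : ∃ S : Finset V, S.card = k) {φ : Sym2 V → ℕ}
    (hφ : ∀ e ∈ G.edgeSet, φ e < 3) (h : G.IsRainbowCycleColoring k φ) : G.crx k = 3 := by
  obtain ⟨S, hS⟩ := hk
  refine le_antisymm (Nat.sInf_le ⟨φ, hφ, h⟩) (le_csInf ⟨3, φ, hφ, h⟩ ?_)
  rintro r ⟨ψ, hψ, hψc⟩
  exact hψc.three_le hψ hS

end SimpleGraph

namespace wheelGraph

variable {n : ℕ}

theorem adj_none_some (a : Fin n) : (wheelGraph n).Adj none (some a) := by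
  simp [wheelGraph]

theorem adj_some_some_succ {a : ℕ} (ha : a + 1 < n) :
    (wheelGraph n).Adj (some ⟨a, by omega⟩) (some ⟨a + 1, ha⟩) := by
  rw [wheelGraph, fromRel_adj]
  refine ⟨by simp [Fin.ext_iff],
    Or.inl (Or.inr ⟨_, _, rfl, rfl, cycleGraph_adj'.mpr (Or.inr ?_)⟩)⟩
  rw [Fin.sub_val_of_le (by simp)]
  simp

def spokeParityColoring (n : ℕ) : Sym2 (Option (Fin n)) → ℕ :=
  Sym2.lift ⟨fun u v => match u, v with
    | none, some a | some a, none => a.val % 2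
    | _, _ => 2, by rintro (_ | _) (_ | _) <;> rfl⟩

theorem spokeParityColoring_lt_three (e : Sym2 (Option (Fin n))) :
    spokeParityColoring n e < 3 := by
  induction e using Sym2.ind with
  | _ u v => cases u <;> cases v <;> simp [spokeParityColoring] <;> omega

theorem exists_rainbow_triangle {a : ℕ} (ha : a + 1 < n) :
    ∃ c : (wheelGraph n).Walk none none, c.IsCycle ∧
      c.support = [none, some ⟨a, by omega⟩, some ⟨a + 1, ha⟩, none] ∧
      (c.edges.map (spokeParityColoring n)).Nodup :=
  SimpleGraph.exists_rainbow_triangle (adj_none_some _) (adj_some_some_succ ha)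
    (adj_none_some _).symm (by simp [spokeParityColoring]; omega)

theorem isRainbowCycleColoring_one (hn : 2 ≤ n) :
    (wheelGraph n).IsRainbowCycleColoring 1 (spokeParityColoring n) := by
  refine isRainbowCycleColoring_one_iff.mpr fun v => ?_
  obtain ⟨a, ha, hv⟩ : ∃ a, ∃ ha : a + 1 < n, v = none ∨ v = some ⟨a, by omega⟩ ∨
      v = some ⟨a + 1, ha⟩ := by
    rcases v with _ | ⟨b, hb⟩
    · exact ⟨0, by omega, Or.inl rfl⟩
    · by_cases hb' : b + 1 < n
      · exact ⟨b, hb', Or.inr (Or.inl rfl)⟩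
      · refine ⟨b - 1, by omega, Or.inr (Or.inr ?_)⟩
        simp only [Option.some.injEq, Fin.mk.injEq]
        omega
  obtain ⟨c, hc, hsupp, hrainbow⟩ := exists_rainbow_triangle ha
  exact ⟨none, c, hc, by rw [hsupp]; rcases hv with rfl | rfl | rfl <;> simp, hrainbow⟩

end wheelGraph

/-- crx_1(W_n) = 3 for n ≥ 3. -/
theorem crx_one_wheel (n : ℕ) (hn : 3 ≤ n) : (wheelGraph n).crx 1 = 3 :=
  crx_eq_three ⟨{none}, rfl⟩ (fun e _ => wheelGraph.spokeParityColoring_lt_three e)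
    (wheelGraph.isRainbowCycleColoring_one (by omega))
end

section
/- For k ≥ 3, if n ≥ R_{2k−2}(k) (the (2k−2)-colour Ramsey number of K_k), then crx_k(K_n) ≥ 2k − 1; that is, any edge-colouring of K_n with at most 2k−2 colours contains a set of k vertices not lying on any common rainbow cycle. -/
open SimpleGraph

/-!
If the edges inside a `k`-set `S` all have one colour, a rainbow cycle through `S` uses at most
one of them. On the other hand a cycle of length `L` through `S` has `k` darts leaving `S` and `k`
darts entering it, so at least `2k - L` of its `L` darts stay inside `S`; hence `L ≥ 2k - 1`.
A rainbow cycle with fewer than `2k - 1` colours has length at most `2k - 2`, and the Ramsey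
hypothesis supplies the monochromatic `S`.
-/

namespace List

lemma countP_add_countP_le_length_add_countP_and {α : Type*} (l : List α) (p q : α → Bool) :
    l.countP p + l.countP q ≤ l.length + l.countP (fun x => p x && q x) := by
  induction l with
  | nil => simp
  | cons a l ih =>
    simp only [countP_cons, length_cons]
    cases p a <;> cases q a <;> simp <;> omega

lemma Nodup.countP_mem_eq_card {α : Type*} [DecidableEq α] {l : List α} (hl : l.Nodup)
    {S : Finset α} (hS : ∀ x ∈ S, x ∈ l) : l.countP (· ∈ S) = S.card := by
  rw [← hl.card_eq_countP, Finset.filter_mem_eq_inter,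
    Finset.inter_eq_right.2 fun x hx => mem_toFinset.2 (hS x hx)]

lemma Nodup.length_le_of_forall_lt {l : List ℕ} (hl : l.Nodup) {r : ℕ} (h : ∀ x ∈ l, x < r) :
    l.length ≤ r := by
  simpa using (hl.subperm fun x hx => mem_range.2 (h x hx)).length_le

end List

namespace SimpleGraph

variable {V : Type*}

lemma cycleThrough_completeGraph {S : Finset V} (hS : 3 ≤ S.card) :
    (completeGraph V).CycleThrough S := by
  obtain ⟨n, hn⟩ := Nat.exists_eq_add_of_le' hS
  let f : Fin (n + 3) ↪ V :=
    (S.equivFinOfCardEq hn).symm.toEmbedding.trans (Function.Embedding.subtype _)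
  let g : cycleGraph (n + 3) →g completeGraph V := ⟨f, fun h => f.injective.ne h.ne⟩
  have hham : (cycleGraph.cycle n).IsHamiltonianCycle :=
    Walk.isHamiltonianCycle_iff_isCycle_and_length_eq.2 ⟨cycleGraph.isCycle_cycle, by simp⟩
  refine ⟨_, (cycleGraph.cycle n).map g,
    (Walk.isCycle_map_iff_of_injective f.injective).2 cycleGraph.isCycle_cycle, fun v hv => ?_⟩
  have hgv : g (S.equivFinOfCardEq hn ⟨v, hv⟩) = v := by simp [g, f]
  rw [Walk.support_map, ← hgv]
  exact List.mem_map_of_mem (hham.mem_support _)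

lemma isRainbowCycleColoring_completeGraph_of_injective {k : ℕ} (hk : 3 ≤ k) {φ : Sym2 V → ℕ}
    (hφ : φ.Injective) : (completeGraph V).IsRainbowCycleColoring k φ := by
  intro S hS
  obtain ⟨u, c, hc, hSc⟩ := cycleThrough_completeGraph (hS ▸ hk : 3 ≤ S.card)
  exact ⟨u, c, hc, hSc, hc.edges_nodup.map hφ⟩

namespace Walk

variable {G : SimpleGraph V} {u : V}

lemma countP_darts_edge_eq_le_one {α : Type*} [DecidableEq α] {v : V} {c : G.Walk u v}
    {φ : Sym2 V → α} (hφ : (c.edges.map φ).Nodup) (a : α) :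
    c.darts.countP (fun d => φ d.edge = a) ≤ 1 := by
  have := List.nodup_iff_count_le_one.1 hφ a
  rw [List.count, edges, List.map_map, List.countP_map] at this
  exact this

variable [DecidableEq V] {c : G.Walk u u} {S : Finset V}

lemma IsCycle.two_mul_card_le_length_add_countP (hc : c.IsCycle) (hS : ∀ v ∈ S, v ∈ c.support) :
    2 * S.card ≤ c.length + c.darts.countP (fun d => d.fst ∈ S ∧ d.snd ∈ S) := by
  have hS_tail : ∀ v ∈ S, v ∈ c.support.tail := fun v hv => by
    rcases List.mem_cons.1 (c.cons_tail_support ▸ hS v hv) with rfl | h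
    exacts [end_mem_tail_support hc.not_nil, h]
  have hsnd := hc.support_nodup.countP_mem_eq_card hS_tail
  have hfst := (tail_support_perm_dropLast_support c).countP_eq (· ∈ S) ▸ hsnd
  rw [← map_snd_darts, List.countP_map] at hsnd
  rw [← map_fst_darts, List.countP_map] at hfst
  have := c.darts.countP_add_countP_le_length_add_countP_and (fun d => d.fst ∈ S)
    (fun d => d.snd ∈ S)
  simp only [Function.comp_def] at hsnd hfst
  simp only [hsnd, hfst, length_darts, Bool.decide_and] at this ⊢
  omega

theorem IsCycle.two_mul_card_le_length_add_one {α : Type*} [DecidableEq α] (hc : c.IsCycle)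
    (hS : ∀ v ∈ S, v ∈ c.support) {φ : Sym2 V → α} (hφ : (c.edges.map φ).Nodup) {a : α}
    (hmono : ∀ x ∈ S, ∀ y ∈ S, G.Adj x y → φ s(x, y) = a) :
    2 * S.card ≤ c.length + 1 := by
  refine (hc.two_mul_card_le_length_add_countP hS).trans (Nat.add_le_add_left ?_ _)
  refine (List.countP_mono_left fun d _ hd => ?_).trans (countP_darts_edge_eq_le_one hφ a)
  simp only [decide_eq_true_eq] at hd ⊢
  exact hmono _ hd.1 _ hd.2 d.adj

end Walk

end SimpleGraph

/-- for k ≥ 3, if n is at least the (2k−2)-colour Ramsey number of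
K_k (i.e. every (2k−2)-edge-colouring of K_n has a monochromatic K_k), then
crx_k(K_n) ≥ 2k − 1. -/
theorem crx_k_complete_lower (k n : ℕ) (hk : 3 ≤ k)
    (hRamsey : ∀ φ : Sym2 (Fin n) → Fin (2 * k - 2),
      ∃ S : Finset (Fin n), S.card = k ∧ ∃ c : Fin (2 * k - 2),
        ∀ u ∈ S, ∀ v ∈ S, u ≠ v → φ s(u, v) = c) :
    2 * k - 1 ≤ (completeGraph (Fin n)).crx k := by
  -- `sInf ∅ = 0`, so some admissible colouring has to be exhibited: any injective one.
  let e := Fintype.equivFin (Sym2 (Fin n))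
  refine le_csInf ⟨_, fun s => e s, fun s _ => (e s).isLt,
    isRainbowCycleColoring_completeGraph_of_injective hk (Fin.val_injective.comp e.injective)⟩ ?_
  rintro r ⟨φ, hφr, hφ⟩
  by_contra! hr
  have hpos : 0 < 2 * k - 2 := by omega
  -- Reducing mod `2k - 2` does not change the colours, which are all below `r ≤ 2k - 2`.
  obtain ⟨S, hS, c₀, hmono⟩ := hRamsey fun s => ⟨φ s % (2 * k - 2), Nat.mod_lt _ hpos⟩
  obtain ⟨u, c, hc, hSc, hrainbow⟩ := hφ S hS
  have hlen : c.length ≤ r := by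
    simpa using hrainbow.length_le_of_forall_lt (by
      simpa using fun s hs => hφr s (c.edges_subset_edgeSet hs))
  have := hc.two_mul_card_le_length_add_one hSc hrainbow (a := (c₀ : ℕ)) fun x hx y hy hxy => by
    have : φ s(x, y) % (2 * k - 2) = c₀ := congrArg Fin.val (hmono x hx y hy hxy.ne)
    rwa [Nat.mod_eq_of_lt ((hφr _ hxy).trans_le (by omega))] at this
  omega
end

section
/- crx_2(Q_n) = crx_3(Q_n) = 2n for every n ≥ 2, where Q_n is the n-dimensional hypercube graph. -/
/-!
A cycle through the all-`false` and all-`true` vectors has length at least `2n`, since each step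
changes one coordinate, so a rainbow cycle through them needs `2n` colours.

Conversely `Q_{n+1}` is the prism `Q_n □ K_2`. Colour both copies of `Q_n` like `Q_n` and the
rungs with two new colours, according to the side of the bipartition of `Q_n` they sit at. Then
every three vertices lie on a rainbow cycle: if they are in one copy, use a rainbow cycle of that
copy; otherwise take a rainbow cycle of `Q_n` through their projections starting at the lone
vertex `z` with edge `zv`, run it in the copy of the other two, and detour its edge `zv` through
the other copy along the rungs at `z` and `v`, whose colours differ because `z` and `v` are
adjacent. Starting from the rainbow `4`-cycle `Q_2`, this uses `2n` colours on `Q_n`.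
-/

open SimpleGraph

/-- The hypercube `Q_n`: vertices are 0/1 vectors of length `n`, adjacent iff they
differ in exactly one coordinate. -/
def cubeGraph (n : ℕ) : SimpleGraph (Fin n → Bool) :=
  SimpleGraph.fromRel (fun u v => (Finset.univ.filter fun i => u i ≠ v i).card = 1)

namespace SimpleGraph

variable {V W : Type*} {G : SimpleGraph V} {H : SimpleGraph W}

theorem Walk.length_le_of_nodup_map_edges {u v : V} (p : G.Walk u v) {φ : Sym2 V → ℕ} {r : ℕ}
    (hφ : ∀ e ∈ p.edges, φ e < r) (h : (p.edges.map φ).Nodup) : p.length ≤ r := by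
  have hsub : (p.edges.map φ).toFinset ⊆ Finset.range r := by
    simpa [Finset.subset_iff] using hφ
  simpa [List.toFinset_card_of_nodup h] using Finset.card_le_card hsub

theorem Walk.two_mul_dist_le_length {u a b : V} (c : G.Walk u u) (ha : a ∈ c.support)
    (hb : b ∈ c.support) : 2 * G.dist a b ≤ c.length := by
  classical
  set d := c.rotate a ha
  have hb' : b ∈ d.support := (c.mem_support_rotate_iff a ha).2 hb
  have hsplit : (d.takeUntil b hb').length + (d.dropUntil b hb').length = c.length := by
    rw [← Walk.length_append, Walk.take_spec, Walk.length_rotate]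
  have h₁ := G.dist_le (d.takeUntil b hb')
  have h₂ := G.dist_le (d.dropUntil b hb')
  rw [SimpleGraph.dist_comm] at h₂
  omega

theorem crx_eq_of_forall_le_length {k m : ℕ} {φ : Sym2 V → ℕ} (hφ : ∀ e ∈ G.edgeSet, φ e < m)
    (hrainbow : G.IsRainbowCycleColoring k φ) (S : Finset V) (hS : S.card = k)
    (hlen : ∀ (u : V) (c : G.Walk u u), c.IsCycle → (∀ v ∈ S, v ∈ c.support) → m ≤ c.length) :
    G.crx k = m := by
  refine le_antisymm (Nat.sInf_le ⟨φ, hφ, hrainbow⟩) (le_csInf ⟨m, φ, hφ, hrainbow⟩ ?_)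
  rintro r ⟨ψ, hψ, hψrainbow⟩
  obtain ⟨u, c, hc, hS, hnodup⟩ := hψrainbow S hS
  exact (hlen u c hc hS).trans
    (c.length_le_of_nodup_map_edges (fun e he => hψ e (c.edges_subset_edgeSet he)) hnodup)

def HasRainbowCycleThrough (G : SimpleGraph V) (φ : Sym2 V → ℕ) (S : Set V) : Prop :=
  ∃ (u : V) (c : G.Walk u u), c.IsCycle ∧ (∀ v ∈ S, v ∈ c.support) ∧ (c.edges.map φ).Nodup

theorem HasRainbowCycleThrough.mono {φ : Sym2 V → ℕ} {S T : Set V}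
    (h : G.HasRainbowCycleThrough φ S) (hTS : T ⊆ S) : G.HasRainbowCycleThrough φ T :=
  let ⟨u, c, hc, hS, hnodup⟩ := h
  ⟨u, c, hc, fun v hv => hS v (hTS hv), hnodup⟩

def IsTripleRainbowColoring (G : SimpleGraph V) (φ : Sym2 V → ℕ) : Prop :=
  ∀ x y z : V, G.HasRainbowCycleThrough φ {x, y, z}

theorem IsTripleRainbowColoring.isRainbowCycleColoring {φ : Sym2 V → ℕ}
    (h : G.IsTripleRainbowColoring φ) {k : ℕ} (hk₀ : 0 < k) (hk₃ : k ≤ 3) :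
    G.IsRainbowCycleColoring k φ := by
  classical
  intro S hS
  obtain ⟨x, y, z, hxyz⟩ : ∃ x y z : V, (S : Set V) ⊆ {x, y, z} := by
    interval_cases k
    · obtain ⟨x, rfl⟩ := Finset.card_eq_one.1 hS
      exact ⟨x, x, x, by simp⟩
    · obtain ⟨x, y, -, rfl⟩ := Finset.card_eq_two.1 hS
      exact ⟨x, y, y, by simp⟩
    · obtain ⟨x, y, z, -, -, -, rfl⟩ := Finset.card_eq_three.1 hS
      exact ⟨x, y, z, by simp⟩
  exact (h x y z).mono hxyz

theorem isTripleRainbowColoring_of_isHamiltonian {u : V} (c : G.Walk u u) (hc : c.IsCycle)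
    (hall : ∀ v, v ∈ c.support) {φ : Sym2 V → ℕ} (hφ : (c.edges.map φ).Nodup) :
    G.IsTripleRainbowColoring φ :=
  fun _ _ _ => ⟨u, c, hc, fun v _ => hall v, hφ⟩

theorem IsTripleRainbowColoring.comap {φ : Sym2 W → ℕ} (h : H.IsTripleRainbowColoring φ)
    (e : G ≃g H) : G.IsTripleRainbowColoring (φ ∘ Sym2.map e) := by
  intro x y z
  obtain ⟨u, c, hc, hS, hnodup⟩ := h (e x) (e y) (e z)
  refine ⟨e.symm u, c.map e.symm.toHom, hc.map e.symm.injective, ?_, ?_⟩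
  · simp only [Set.mem_insert_iff, Set.mem_singleton_iff, forall_eq_or_imp, forall_eq] at hS ⊢
    obtain ⟨hx, hy, hz⟩ := hS
    simp only [Walk.support_map, List.mem_map]
    exact ⟨⟨_, hx, e.symm_apply_apply x⟩, ⟨_, hy, e.symm_apply_apply y⟩,
      ⟨_, hz, e.symm_apply_apply z⟩⟩
  · simpa [Walk.edges_map, List.map_map, Function.comp_def, Sym2.map_map] using hnodup

def Coloring.prism (χ : G.Coloring Bool) : (G □ (⊤ : SimpleGraph Bool)).Coloring Bool :=
  Coloring.mk (fun p => xor (χ p.1) p.2) <| by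
    rintro ⟨v, a⟩ ⟨w, b⟩ (⟨hvw, rfl : a = b⟩ | ⟨hab, rfl : v = w⟩)
    · simpa using χ.valid hvw
    · simpa using hab

theorem Walk.support_boxProdLeft (b : W) {v w : V} (q : G.Walk v w) :
    (q.boxProdLeft H b).support = q.support.map (·, b) :=
  Walk.support_map _ q

theorem Walk.edges_boxProdLeft (b : W) {v w : V} (q : G.Walk v w) :
    (q.boxProdLeft H b).edges = q.edges.map (Sym2.map (·, b)) :=
  Walk.edges_map _ q

-- Only the values on edges matter: on a rung `s((v, a), (v, b))` the conjunction is `χ v`,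
-- and it makes the formula symmetric.
def prismEdgeColoring (φ : Sym2 V → ℕ) (χ : V → Bool) (m : ℕ) : Sym2 (V × Bool) → ℕ :=
  Sym2.lift ⟨fun p q => if p.2 = q.2 then φ s(p.1, q.1) else m + (χ p.1 && χ q.1).toNat,
    fun p q => by simp only [eq_comm, Sym2.eq_swap, Bool.and_comm]⟩

variable {φ : Sym2 V → ℕ} {χ : V → Bool} {m : ℕ}

@[simp]
theorem prismEdgeColoring_mk_layer (v w : V) (b : Bool) :
    prismEdgeColoring φ χ m s((v, b), (w, b)) = φ s(v, w) := by
  simp [prismEdgeColoring]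

@[simp]
theorem prismEdgeColoring_map_layer (b : Bool) (e : Sym2 V) :
    prismEdgeColoring φ χ m (e.map (·, b)) = φ e := by
  induction e using Sym2.ind with
  | _ v w => simp

theorem prismEdgeColoring_rung (v : V) {a b : Bool} (hab : a ≠ b) :
    prismEdgeColoring φ χ m s((v, a), (v, b)) = m + (χ v).toNat := by
  simp [prismEdgeColoring, hab]

theorem prismEdgeColoring_lt (hφ : ∀ e ∈ G.edgeSet, φ e < m) :
    ∀ e ∈ (G □ (⊤ : SimpleGraph Bool)).edgeSet, prismEdgeColoring φ χ m e < m + 2 := by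
  rintro ⟨⟨v, a⟩, ⟨w, b⟩⟩ (⟨hvw, rfl : a = b⟩ | ⟨hab, rfl : v = w⟩)
  · simpa using (hφ s(v, w) hvw).trans_le (Nat.le_add_right m 2)
  · rw [prismEdgeColoring_rung v hab]
    have := Bool.toNat_le (χ v)
    omega

def Walk.prismCycle (b : Bool) {z v : V} (hzv : G.Adj z v) (q : G.Walk v z) :
    (G □ (⊤ : SimpleGraph Bool)).Walk (z, !b) (z, !b) :=
  .cons (boxProd_adj_left.2 hzv) <| .cons (boxProd_adj_right.2 (Bool.not_ne_self b)) <|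
    (q.boxProdLeft ⊤ b).concat (boxProd_adj_right.2 (Bool.self_ne_not b))

theorem Walk.support_prismCycle (b : Bool) {z v : V} (hzv : G.Adj z v) (q : G.Walk v z) :
    (q.prismCycle b hzv).support =
      (z, !b) :: (v, !b) :: (q.support.map (·, b) ++ [(z, !b)]) := by
  simp [Walk.prismCycle, Walk.support_concat, Walk.support_boxProdLeft]

theorem Walk.map_edges_prismCycle (b : Bool) {z v : V} (hzv : G.Adj z v) (q : G.Walk v z) :
    (q.prismCycle b hzv).edges.map (prismEdgeColoring φ χ m) =
      φ s(z, v) :: (m + (χ v).toNat) :: (q.edges.map φ ++ [m + (χ z).toNat]) := by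
  simp [Walk.prismCycle, Walk.edges_concat, Walk.edges_boxProdLeft, prismEdgeColoring_rung,
    Function.comp_def]

theorem Walk.IsPath.isCycle_prismCycle (b : Bool) {z v : V} (hzv : G.Adj z v) {q : G.Walk v z}
    (hq : q.IsPath) : (q.prismCycle b hzv).IsCycle := by
  rw [Walk.prismCycle, Walk.cons_isCycle_iff, Walk.isPath_def]
  have hinj : Function.Injective ((·, b) : V → V × Bool) := fun _ _ h => congrArg Prod.fst h
  constructor
  · simp [Walk.support_concat, Walk.support_boxProdLeft, List.nodup_append, hzv.ne',
      hq.support_nodup.map hinj]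
  · simp only [Walk.edges_cons, Walk.edges_concat, Walk.edges_boxProdLeft, List.concat_eq_append,
      List.mem_cons, List.mem_append, List.mem_map, not_or, not_exists, not_and]
    refine ⟨by simp [hzv.ne], fun e _ => ?_, by simp [hzv.ne']⟩
    induction e using Sym2.ind
    simp

theorem Walk.nodup_map_edges_prismCycle (hφ : ∀ e ∈ G.edgeSet, φ e < m) (b : Bool) {z v : V}
    (hzv : G.Adj z v) (q : G.Walk v z) (hχ : χ z ≠ χ v)
    (hnodup : ((Walk.cons hzv q).edges.map φ).Nodup) :
    ((q.prismCycle b hzv).edges.map (prismEdgeColoring φ χ m)).Nodup := by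
  have hlt : ∀ c ∈ (Walk.cons hzv q).edges.map φ, c < m := by
    simpa using fun e he => hφ e ((Walk.cons hzv q).edges_subset_edgeSet he)
  have hχ' : (χ z).toNat ≠ (χ v).toNat := by revert hχ; cases χ z <;> cases χ v <;> simp
  rw [Walk.map_edges_prismCycle]
  simp only [Walk.edges_cons, List.map_cons, List.mem_cons, List.nodup_cons,
    forall_eq_or_imp] at hnodup hlt
  simp only [List.nodup_cons, List.mem_cons, List.mem_append, List.nodup_append]
  grind

theorem IsTripleRainbowColoring.prism_sameLayer (h : G.IsTripleRainbowColoring φ) (b : Bool)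
    (x y z : V) : (G □ (⊤ : SimpleGraph Bool)).HasRainbowCycleThrough (prismEdgeColoring φ χ m)
      {(x, b), (y, b), (z, b)} := by
  obtain ⟨u, c, hc, hS, hnodup⟩ := h x y z
  refine ⟨(u, b), c.boxProdLeft ⊤ b, hc.map (G.boxProdLeft ⊤ b).injective, ?_, ?_⟩
  · simpa [Walk.support_boxProdLeft] using hS
  · simpa [Walk.edges_boxProdLeft, Function.comp_def] using hnodup

theorem IsTripleRainbowColoring.prism_twoLayers (hφ : ∀ e ∈ G.edgeSet, φ e < m)
    (h : G.IsTripleRainbowColoring φ) (χ : G.Coloring Bool) (b : Bool) (x y z : V) :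
    (G □ (⊤ : SimpleGraph Bool)).HasRainbowCycleThrough (prismEdgeColoring φ χ m)
      {(x, b), (y, b), (z, !b)} := by
  classical
  obtain ⟨u, c, hc, hS, hnodup⟩ := h z x y
  simp only [Set.mem_insert_iff, Set.mem_singleton_iff, forall_eq_or_imp, forall_eq] at hS
  obtain ⟨hz, hx, hy⟩ := hS
  have hcycle := hc.rotate hz
  have hrot : ((c.rotate z hz).edges.map φ).Nodup :=
    ((c.rotate_edges z hz).map φ).nodup_iff.2 hnodup
  rw [← c.mem_support_rotate_iff z hz] at hx hy
  generalize c.rotate z hz = d at hcycle hrot hx hy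
  cases d with
  | nil => exact absurd rfl hcycle.ne_nil
  | cons hzv q =>
    have hq : q.IsPath := ((Walk.cons_isCycle_iff q hzv).1 hcycle).1
    have hmem : ∀ w ∈ (Walk.cons hzv q).support, w ∈ q.support := by
      rintro w (_ | ⟨_, hw⟩)
      exacts [q.end_mem_support, hw]
    refine ⟨_, q.prismCycle b hzv, hq.isCycle_prismCycle b hzv, ?_,
      Walk.nodup_map_edges_prismCycle hφ b hzv q (χ.valid hzv) hrot⟩
    simp [Walk.support_prismCycle, hmem x hx, hmem y hy]

theorem IsTripleRainbowColoring.prism (hφ : ∀ e ∈ G.edgeSet, φ e < m)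
    (h : G.IsTripleRainbowColoring φ) (χ : G.Coloring Bool) :
    (G □ (⊤ : SimpleGraph Bool)).IsTripleRainbowColoring (prismEdgeColoring φ χ m) := by
  rintro ⟨x, a⟩ ⟨y, a'⟩ ⟨z, a''⟩
  have hperm : ∀ {p q r : V × Bool}, ({p, q, r} : Set (V × Bool)) ⊆ {q, r, p} ∧
      ({p, q, r} : Set (V × Bool)) ⊆ {p, r, q} := by
    intro p q r
    constructor <;> intro s hs <;> simp only [Set.mem_insert_iff, Set.mem_singleton_iff] at hs ⊢ <;>
      tauto
  cases a <;> cases a' <;> cases a''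
  all_goals first
    | exact h.prism_sameLayer _ x y z
    | exact h.prism_twoLayers hφ χ _ x y z
    | exact (h.prism_twoLayers hφ χ _ x z y).mono hperm.2
    | exact (h.prism_twoLayers hφ χ _ y z x).mono hperm.1

end SimpleGraph

theorem hammingDist_eq_hammingDist_init_add {n : ℕ} {β : Type*} [DecidableEq β]
    (x y : Fin (n + 1) → β) : hammingDist x y =
      hammingDist (Fin.init x) (Fin.init y) + if x (Fin.last n) = y (Fin.last n) then 0 else 1 := by
  rw [hammingDist, hammingDist, Finset.card_filter, Finset.card_filter, Fin.sum_univ_castSucc]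
  congr 1
  by_cases h : x (Fin.last n) = y (Fin.last n) <;> simp [h]

theorem cubeGraph_adj {n : ℕ} {u v : Fin n → Bool} :
    (cubeGraph n).Adj u v ↔ hammingDist u v = 1 := by
  change u ≠ v ∧ (hammingDist u v = 1 ∨ hammingDist v u = 1) ↔ _
  rw [hammingDist_comm v u, or_self]
  exact ⟨And.right, fun h => ⟨hammingDist_ne_zero.1 (by omega), h⟩⟩

def cubeGraphSuccIso (n : ℕ) : cubeGraph (n + 1) ≃g cubeGraph n □ (⊤ : SimpleGraph Bool) where
  toFun x := (Fin.init x, x (Fin.last n))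
  invFun p := Fin.snoc p.1 p.2
  left_inv x := Fin.snoc_init_self x
  right_inv p := by simp
  map_rel_iff' {x y} := by
    simp only [Equiv.coe_fn_mk, boxProd_adj, top_adj, cubeGraph_adj,
      hammingDist_eq_hammingDist_init_add x y, ← hammingDist_eq_zero (x := Fin.init x)]
    split_ifs with h <;> simp [h]

def cubeGraphColoring : (n : ℕ) → (cubeGraph n).Coloring Bool
  | 0 => Coloring.mk (fun _ => false) fun h => absurd (Subsingleton.elim _ _) h.ne
  | n + 1 => (cubeGraphColoring n).prism.comp (cubeGraphSuccIso n).toHom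

theorem cubeGraph_hammingDist_le_length {n : ℕ} {u v : Fin n → Bool}
    (p : (cubeGraph n).Walk u v) : hammingDist u v ≤ p.length := by
  induction p with
  | nil => simp
  | @cons a b c h p ih =>
    have := hammingDist_triangle a b c
    rw [cubeGraph_adj.1 h] at this
    rw [Walk.length_cons]
    omega

theorem cubeGraph_two_mul_le_length {n : ℕ} {u : Fin n → Bool} (c : (cubeGraph n).Walk u u)
    (hbot : ⊥ ∈ c.support) (htop : ⊤ ∈ c.support) : 2 * n ≤ c.length := by
  have hreach : (cubeGraph n).Reachable ⊥ ⊤ :=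
    ⟨(c.takeUntil ⊥ hbot).reverse.append (c.takeUntil ⊤ htop)⟩
  obtain ⟨p, hp⟩ := hreach.exists_walk_length_eq_dist
  have hdist : n ≤ (cubeGraph n).dist ⊥ ⊤ := by
    simpa [hp, hammingDist] using cubeGraph_hammingDist_le_length p
  have := c.two_mul_dist_le_length hbot htop
  omega

theorem cubeGraph_two_isTripleRainbowColoring :
    ∃ φ : Sym2 (Fin 2 → Bool) → ℕ, (∀ e ∈ (cubeGraph 2).edgeSet, φ e < 2 * 2) ∧
      (cubeGraph 2).IsTripleRainbowColoring φ := by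
  let c : (cubeGraph 2).Walk ![false, false] ![false, false] :=
    .cons (cubeGraph_adj.2 (by decide) : (cubeGraph 2).Adj _ ![true, false]) <|
    .cons (cubeGraph_adj.2 (by decide) : (cubeGraph 2).Adj _ ![true, true]) <|
    .cons (cubeGraph_adj.2 (by decide) : (cubeGraph 2).Adj _ ![false, true]) <|
    .cons (cubeGraph_adj.2 (by decide)) .nil
  refine ⟨fun e => if e = s(![false, false], ![true, false]) then 0
    else if e = s(![true, false], ![true, true]) then 1
    else if e = s(![true, true], ![false, true]) then 2 else 3,
    fun e _ => by dsimp only; split_ifs <;> omega,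
    isTripleRainbowColoring_of_isHamiltonian c
      ((Walk.isCycle_def c).2 ⟨⟨by decide⟩, by simp [c], by decide⟩) (by decide) (by decide)⟩

theorem cubeGraph_exists_isTripleRainbowColoring {n : ℕ} (hn : 2 ≤ n) :
    ∃ φ : Sym2 (Fin n → Bool) → ℕ, (∀ e ∈ (cubeGraph n).edgeSet, φ e < 2 * n) ∧
      (cubeGraph n).IsTripleRainbowColoring φ := by
  induction n, hn using Nat.le_induction with
  | base => exact cubeGraph_two_isTripleRainbowColoring
  | succ n _ ih =>
    obtain ⟨φ, hφ, h⟩ := ih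
    refine ⟨prismEdgeColoring φ (cubeGraphColoring n) (2 * n) ∘ Sym2.map (cubeGraphSuccIso n),
      fun e he => ?_, (h.prism hφ _).comap _⟩
    have := prismEdgeColoring_lt (χ := cubeGraphColoring n) hφ _
      ((cubeGraphSuccIso n).map_mem_edgeSet_iff.2 he)
    simpa [Nat.mul_succ] using this

theorem cubeGraph_crx_eq {n k : ℕ} (hn : 2 ≤ n) (hk₂ : 2 ≤ k) (hk₃ : k ≤ 3) :
    (cubeGraph n).crx k = 2 * n := by
  classical
  obtain ⟨φ, hφ, h⟩ := cubeGraph_exists_isTripleRainbowColoring hn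
  have hcard : 3 ≤ (Finset.univ : Finset (Fin n → Bool)).card := by
    simpa using (Nat.pow_le_pow_right two_pos hn).trans' (by norm_num : 3 ≤ 2 ^ 2)
  obtain ⟨S, hsub, -, hS⟩ := Finset.exists_subsuperset_card_eq (Finset.subset_univ {⊥, ⊤})
    (Finset.card_le_two.trans hk₂) (hk₃.trans hcard)
  refine crx_eq_of_forall_le_length hφ (h.isRainbowCycleColoring (by omega) hk₃) S hS ?_
  intro u c _ hc
  exact cubeGraph_two_mul_le_length c (hc ⊥ (hsub (by simp))) (hc ⊤ (hsub (by simp)))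

/-- crx_2(Q_n) = crx_3(Q_n) = 2n for n ≥ 2. -/
theorem crx_two_three_cube (n : ℕ) (hn : 2 ≤ n) :
    (cubeGraph n).crx 2 = 2 * n ∧ (cubeGraph n).crx 3 = 2 * n :=
  ⟨cubeGraph_crx_eq hn le_rfl (by norm_num), cubeGraph_crx_eq hn (by norm_num) le_rfl⟩
end

section
/- For 2^{n−1} ≤ k ≤ 2^n and n ≥ 2, crx_k(Q_n) = 2^n; in particular, any cycle of Q_n containing all 2^{n−1} vertices of one bipartition class must be a Hamilton cycle. -/
open SimpleGraph

/-!
The weight-parity 2-colouring makes `Q_n` bipartite, and along a closed walk the colours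
alternate, so a cycle meets each colour class in exactly half of its vertices. Since `Q_n` has a
Hamiltonian cycle (the reflected Gray code: two copies of a Hamiltonian path of `Q_{n-1}` joined
by two cross edges), both classes have `2^{n-1}` vertices. Hence a cycle through all even vertices
has length at least `2^n`, i.e. it is Hamiltonian, and a rainbow one needs `2^n` colours; giving
the edges of one Hamiltonian cycle distinct colours shows that `2^n` colours suffice.
-/

open Finset

namespace SimpleGraph

variable {V : Type*} {G : SimpleGraph V}

namespace Coloring

variable (C : G.Coloring Bool)

theorem countP_support_tail {u v : V} (w : G.Walk u v) (b : Bool) :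
    w.support.tail.countP (C · = b) = if C u = b then w.length / 2 else (w.length + 1) / 2 := by
  induction w with
  | nil => simp
  | @cons u x v h w ih =>
    rw [Walk.support_cons, List.tail_cons, ← w.cons_tail_support, List.countP_cons, ih,
      Walk.length_cons]
    have := C.valid h
    cases hu : C u <;> cases hx : C x <;> cases b <;> simp_all <;> omega

theorem two_mul_countP_support_tail {u : V} (w : G.Walk u u) (b : Bool) :
    2 * w.support.tail.countP (C · = b) = w.length := by
  obtain ⟨m, hm⟩ : Even w.length := (C.even_length_iff_congr w).mpr Iff.rfl
  rw [countP_support_tail]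
  split_ifs <;> omega

end Coloring

namespace Walk

variable {u : V} {c : G.Walk u u}

theorem IsCycle.two_mul_card_filter_color [DecidableEq V] (hc : c.IsCycle) (C : G.Coloring Bool)
    (b : Bool) : 2 * #{v ∈ c.support.toFinset | C v = b} = c.length := by
  have htail : c.support.toFinset = c.support.tail.toFinset := by
    conv_lhs => rw [← c.cons_tail_support]
    rw [List.toFinset_cons,
      insert_eq_of_mem (by simpa using c.end_mem_tail_support hc.not_nil)]
  have hfilter : {v ∈ c.support.tail.toFinset | C v = b}
      = (c.support.tail.filter (C · = b)).toFinset := by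
    ext; simp
  rw [htail, hfilter, List.toFinset_card_of_nodup (hc.support_nodup.filter _),
    ← List.countP_eq_length_filter, C.two_mul_countP_support_tail]

theorem IsCycle.isHamiltonianCycle_of_forall_color_mem [Fintype V] [DecidableEq V]
    (hc : c.IsCycle) (C : G.Coloring Bool) (b : Bool)
    (hcard : Fintype.card V ≤ 2 * #{v | C v = b}) (hmem : ∀ v, C v = b → v ∈ c.support) :
    c.IsHamiltonianCycle := by
  rw [isHamiltonianCycle_iff_isCycle_and_length_eq]
  refine ⟨hc, le_antisymm ?_ ?_⟩
  · have := hc.isPath_tail.length_lt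
    rw [← length_tail_add_one hc.not_nil]
    omega
  · calc Fintype.card V ≤ 2 * #{v | C v = b} := hcard
      _ ≤ 2 * #{v ∈ c.support.toFinset | C v = b} := by
        refine Nat.mul_le_mul_left 2 (card_le_card fun v hv => ?_)
        simp only [mem_filter, mem_univ, true_and, List.mem_toFinset] at hv ⊢
        exact ⟨hmem v hv, hv⟩
      _ = c.length := hc.two_mul_card_filter_color C b

theorem IsHamiltonianCycle.two_mul_card_color [Fintype V] [DecidableEq V]
    (hc : c.IsHamiltonianCycle) (C : G.Coloring Bool) (b : Bool) :
    2 * #{v | C v = b} = Fintype.card V := by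
  rw [← hc.length_eq, ← hc.isCycle.two_mul_card_filter_color C b]
  congr 2
  ext v
  simp [hc.mem_support]

theorem IsHamiltonian.isHamiltonianCycle_cons [DecidableEq V] {v w : V} {p : G.Walk w v}
    (hp : p.IsHamiltonian) (h : G.Adj v w) (hlen : 2 ≤ p.length) :
    (cons h p).IsHamiltonianCycle := by
  have htail : (cons h p).tail.support = p.support := by
    rw [support_tail_of_not_nil _ not_nil_cons, support_cons, List.tail_cons]
  refine ⟨isCycle_iff_isPath_tail_and_le_length.mpr ⟨?_, by rw [length_cons]; omega⟩, ?_⟩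
  · exact IsPath.mk' (htail ▸ hp.isPath.support_nodup)
  · exact fun x => htail ▸ hp x

theorem length_le_of_nodup_map_edges_s19 {x y : V} (w : G.Walk x y) {φ : Sym2 V → ℕ}
    {r : ℕ} (hφ : ∀ e ∈ G.edgeSet, φ e < r) (hnd : (w.edges.map φ).Nodup) : w.length ≤ r := by
  calc w.length = #(w.edges.map φ).toFinset := by
        rw [List.toFinset_card_of_nodup hnd, List.length_map, w.length_edges]
    _ ≤ #(range r) := card_le_card fun i hi => by
        obtain ⟨e, he, rfl⟩ := List.mem_map.mp (List.mem_toFinset.mp hi)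
        exact mem_range.mpr (hφ e (w.edges_subset_edgeSet he))
    _ = r := card_range r

theorem IsHamiltonianCycle.exists_isRainbowCycleColoring_s19 [DecidableEq V] {a : V}
    {p : G.Walk a a} (hp : p.IsHamiltonianCycle) (k : ℕ) :
    ∃ φ : Sym2 V → ℕ, (∀ e ∈ G.edgeSet, φ e < p.length) ∧ G.IsRainbowCycleColoring k φ := by
  refine ⟨fun e => if e ∈ p.edges then p.edges.idxOf e else 0, fun e _ => ?_,
    fun S _ => ⟨a, p, hp.isCycle, fun v _ => hp.mem_support v, ?_⟩⟩
  · dsimp only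
    split_ifs with he
    · exact p.length_edges ▸ List.idxOf_lt_length_iff.mpr he
    · exact lt_of_lt_of_le (by norm_num) hp.isCycle.three_le_length
  · refine List.Nodup.map_on (fun e he f hf hef => ?_) hp.isCycle.edges_nodup
    simp only [if_pos he, if_pos hf] at hef
    exact (List.idxOf_inj he).mp hef

end Walk

theorem crx_eq_card_of_isHamiltonianCycle [Fintype V] [DecidableEq V] {a : V} {p : G.Walk a a}
    (hp : p.IsHamiltonianCycle) {k : ℕ} {S : Finset V} (hS : #S = k)
    (hcycle : ∀ (u : V) (c : G.Walk u u), c.IsCycle → (∀ v ∈ S, v ∈ c.support) →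
      c.IsHamiltonianCycle) :
    G.crx k = Fintype.card V := by
  obtain ⟨φ, hφ⟩ := hp.exists_isRainbowCycleColoring_s19 k
  apply le_antisymm
  · exact hp.length_eq ▸ Nat.sInf_le ⟨φ, hφ⟩
  · refine le_csInf ⟨_, φ, hφ⟩ ?_
    rintro r ⟨ψ, hψ, hrainbow⟩
    obtain ⟨u, c, hc, hSc, hnd⟩ := hrainbow S hS
    exact (hcycle u c hc hSc).length_eq ▸ c.length_le_of_nodup_map_edges_s19 hψ hnd

end SimpleGraph

theorem hammingDist_fin_cons {n : ℕ} {β : Type*} [DecidableEq β] (a b : β)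
    (x y : Fin n → β) :
    hammingDist (Fin.cons a x : Fin (n + 1) → β) (Fin.cons b y) =
      (if a = b then 0 else 1) + hammingDist x y := by
  simp only [hammingDist, card_filter, Fin.sum_univ_succ, Fin.cons_zero, Fin.cons_succ, ne_eq,
    ite_not]

theorem card_filter_add_card_filter_eq_two_mul_add_hammingDist {ι : Type*} [Fintype ι]
    (x y : ι → Bool) :
    #{i | x i = true} + #{i | y i = true} =
      2 * #{i | x i = true ∧ y i = true} + hammingDist x y := by
  simp only [hammingDist, card_filter, ← sum_add_distrib, mul_sum]
  refine sum_congr rfl fun i _ => ?_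
  cases x i <;> cases y i <;> rfl

namespace cubeGraph

theorem adj_iff {n : ℕ} {x y : Fin n → Bool} :
    (cubeGraph n).Adj x y ↔ hammingDist x y = 1 := by
  rw [cubeGraph, fromRel_adj]
  change x ≠ y ∧ (hammingDist x y = 1 ∨ hammingDist y x = 1) ↔ _
  rw [hammingDist_comm y x, or_self, and_iff_right_iff_imp]
  rintro h rfl
  simp at h

def consHom (n : ℕ) (b : Bool) : cubeGraph n →g cubeGraph (n + 1) where
  toFun x := Fin.cons b x
  map_rel' h := by simpa [adj_iff, hammingDist_fin_cons] using h

theorem consHom_injective (n : ℕ) (b : Bool) : Function.Injective (consHom n b) :=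
  Fin.cons_right_injective (α := fun _ => Bool) b

theorem adj_consHom_false_consHom_true {n : ℕ} (x : Fin n → Bool) :
    (cubeGraph (n + 1)).Adj (consHom n false x) (consHom n true x) := by
  simp [consHom, adj_iff, hammingDist_fin_cons]

def parityColoring (n : ℕ) : (cubeGraph n).Coloring Bool :=
  Coloring.mk (fun v => decide (#{i | v i = true} % 2 = 0)) fun {x y} h => by
    have := card_filter_add_card_filter_eq_two_mul_add_hammingDist x y
    rw [adj_iff.mp h] at this
    simp only [ne_eq, decide_eq_decide]
    omega

theorem parityColoring_eq_true_iff {n : ℕ} (v : Fin n → Bool) :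
    parityColoring n v = true ↔ #{i | v i = true} % 2 = 0 :=
  decide_eq_true_iff

theorem card_vertex (n : ℕ) : Fintype.card (Fin n → Bool) = 2 ^ n := by simp

theorem exists_isHamiltonian_consHom_false_consHom_true {n : ℕ} {s t : Fin n → Bool}
    {p : (cubeGraph n).Walk s t} (hp : p.IsHamiltonian) :
    ∃ q : (cubeGraph (n + 1)).Walk (consHom n false s) (consHom n true s), q.IsHamiltonian := by
  refine ⟨(p.map (consHom n false)).append
    (.cons (adj_consHom_false_consHom_true t) (p.reverse.map (consHom n true))), ?_⟩
  rw [Walk.isHamiltonian_iff_isPath_and_length_eq] at hp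
  refine Walk.isHamiltonian_iff_isPath_and_length_eq.mpr ⟨?_, ?_⟩
  · apply Walk.IsPath.mk'
    rw [Walk.support_append, Walk.support_cons, List.tail_cons, Walk.support_map,
      Walk.support_map, Walk.support_reverse, List.nodup_append]
    refine ⟨hp.1.support_nodup.map (consHom_injective n false),
      (List.nodup_reverse.mpr hp.1.support_nodup).map (consHom_injective n true), ?_⟩
    simp only [List.mem_map]
    rintro _ ⟨x, -, rfl⟩ _ ⟨y, -, rfl⟩ h
    simpa [consHom] using congrFun h 0
  · simp only [Walk.length_append, Walk.length_cons, Walk.length_map, Walk.length_reverse, hp.2,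
      card_vertex, pow_succ]
    have := Nat.one_le_two_pow (n := n)
    omega

theorem exists_isHamiltonian (n : ℕ) :
    ∃ (s t : Fin n → Bool) (p : (cubeGraph n).Walk s t), p.IsHamiltonian := by
  induction n with
  | zero => exact ⟨isEmptyElim, isEmptyElim, .nil, .of_subsingleton⟩
  | succ n ih =>
    obtain ⟨s, t, p, hp⟩ := ih
    exact ⟨_, _, exists_isHamiltonian_consHom_false_consHom_true hp⟩

theorem exists_isHamiltonianCycle {n : ℕ} (hn : 2 ≤ n) :
    ∃ (u : Fin n → Bool) (c : (cubeGraph n).Walk u u), c.IsHamiltonianCycle := by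
  obtain ⟨m, rfl⟩ : ∃ m, n = m + 1 := ⟨n - 1, by omega⟩
  obtain ⟨s, t, p, hp⟩ := exists_isHamiltonian m
  obtain ⟨q, hq⟩ := exists_isHamiltonian_consHom_false_consHom_true hp
  refine ⟨_, _, hq.isHamiltonianCycle_cons (adj_consHom_false_consHom_true s).symm ?_⟩
  have : 4 ≤ 2 ^ (m + 1) := by
    calc 4 = 2 ^ 2 := rfl
      _ ≤ 2 ^ (m + 1) := Nat.pow_le_pow_right two_pos hn
  rw [hq.length_eq, card_vertex]
  omega

end cubeGraph

/-- for 2^{n−1} ≤ k ≤ 2^n and n ≥ 2, crx_k(Q_n) = 2^n; in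
particular any cycle of Q_n containing all even-weight vertices is a Hamilton cycle. -/
theorem crx_k_cube_large (n k : ℕ) (hn : 2 ≤ n) (hk1 : 2 ^ (n - 1) ≤ k)
    (hk2 : k ≤ 2 ^ n) :
    (cubeGraph n).crx k = 2 ^ n ∧
      ∀ (u : Fin n → Bool) (c : (cubeGraph n).Walk u u), c.IsCycle →
        (∀ v : Fin n → Bool,
          (Finset.univ.filter fun i => v i = true).card % 2 = 0 → v ∈ c.support) →
        ∀ v : Fin n → Bool, v ∈ c.support := by
  obtain ⟨a, p, hp⟩ := cubeGraph.exists_isHamiltonianCycle hn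
  let C := cubeGraph.parityColoring n
  have hbalanced := hp.two_mul_card_color C true
  have hevens : ∀ (u : Fin n → Bool) (c : (cubeGraph n).Walk u u), c.IsCycle →
      (∀ v, C v = true → v ∈ c.support) → c.IsHamiltonianCycle :=
    fun u c hc => hc.isHamiltonianCycle_of_forall_color_mem C true hbalanced.ge
  have hpow : 2 ^ n = 2 * 2 ^ (n - 1) := by rw [← pow_succ']; congr; omega
  obtain ⟨S, hevens_sub, hS⟩ := exists_superset_card_eq (s := {v | C v = true}) (n := k)
    (by rw [cubeGraph.card_vertex] at hbalanced; omega) (by rwa [cubeGraph.card_vertex])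
  refine ⟨?_, fun u c hc hmem => (hevens u c hc fun v hv =>
    hmem v ((cubeGraph.parityColoring_eq_true_iff v).mp hv)).mem_support⟩
  rw [crx_eq_card_of_isHamiltonianCycle hp hS fun u c hc hSc =>
    hevens u c hc fun v hv => hSc v (hevens_sub (by simpa using hv)), cubeGraph.card_vertex]
end
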